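/- arXiv:2004.06934 — 5 statements merged into one kernel-verified Lean document; each statement's English description precedes it below -/
import Mathlib

section
/- If Γ is a maximal IL(X)-consistent set with ¬(A ▷ B) ∈ Γ, then there exists a maximal IL(X)-consistent set Δ such that Γ ≺_B Δ and A ∈ Δ and Box ¬A ∈ Δ. -/
/-- Formulas of interpretability logic: ⊥, variables, →, Box, ▷. -/
inductive Formula : Type
  | bot : Formula
  | var : ℕ → Formula
  | impl : Formula → Formula → Formula
  | box : Formula → Formula
  | rhd : Formula → Formula → Formula

namespace Formula
def neg (φ : Formula) : Formula := φ.impl bot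
def conj (φ ψ : Formula) : Formula := (φ.impl ψ.neg).neg
def disj (φ ψ : Formula) : Formula := φ.neg.impl ψ
def top : Formula := neg bot
def dia (φ : Formula) : Formula := ((box φ.neg)).neg
end Formula

open Formula

/-- Hilbert-style provability in IL extended with a set `Ax` of extra axioms. -/
inductive ILProof (Ax : Set Formula) : Formula → Prop
  | ax {φ} : φ ∈ Ax → ILProof Ax φ
  | k1 (φ ψ : Formula) : ILProof Ax (φ.impl (ψ.impl φ))
  | k2 (φ ψ χ : Formula) : ILProof Ax ((φ.impl (ψ.impl χ)).impl ((φ.impl ψ).impl (φ.impl χ)))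
  | dne (φ : Formula) : ILProof Ax ((φ.neg.neg).impl φ)
  | L1 (φ ψ : Formula) : ILProof Ax ((box (φ.impl ψ)).impl ((box φ).impl (box ψ)))
  | L2 (φ : Formula) : ILProof Ax ((box φ).impl (box (box φ)))
  | L3 (φ : Formula) : ILProof Ax ((box ((box φ).impl φ)).impl (box φ))
  | J1 (φ ψ : Formula) : ILProof Ax ((box (φ.impl ψ)).impl (rhd φ ψ))
  | J2 (φ ψ χ : Formula) : ILProof Ax (((rhd φ ψ).conj (rhd ψ χ)).impl (rhd φ χ))
  | J3 (φ ψ χ : Formula) : ILProof Ax (((rhd φ χ).conj (rhd ψ χ)).impl (rhd (φ.disj ψ) χ))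
  | J4 (φ ψ : Formula) : ILProof Ax ((rhd φ ψ).impl ((dia φ).impl (dia ψ)))
  | J5 (φ : Formula) : ILProof Ax (rhd (dia φ) φ)
  | mp {φ ψ} : ILProof Ax (φ.impl ψ) → ILProof Ax φ → ILProof Ax ψ
  | nec {φ} : ILProof Ax φ → ILProof Ax (box φ)

/-- Montagna's principle M as a set of axiom instances. -/
def Mschema : Set Formula :=
  {φ | ∃ A B C : Formula,
    φ = (rhd A B).impl (rhd (A.conj (box C)) (B.conj (box C)))}

/-- Provability in IL(M). -/
def ILMProvable (φ : Formula) : Prop := ILProof Mschema φ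

/-- A set of formulas is IL(X)-consistent if no finite list of its members
implies ⊥ (as an iterated implication) provably in IL(X). -/
def Consistent (Ax : Set Formula) (Γ : Set Formula) : Prop :=
  ¬ ∃ L : List Formula, (∀ ψ ∈ L, ψ ∈ Γ) ∧
      ILProof Ax (L.foldr Formula.impl Formula.bot)

/-- Maximal IL(X)-consistent set. -/
def MCS (Ax : Set Formula) (Γ : Set Formula) : Prop :=
  Consistent Ax Γ ∧ ∀ φ : Formula, φ ∈ Γ ∨ φ.neg ∈ Γ

/-- The successor relation Γ ≺ Δ. -/
def prec (Γ Δ : Set Formula) : Prop :=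
  ∀ A : Formula, box A ∈ Γ → A ∈ Δ ∧ box A ∈ Δ

/-- The C-critical successor relation Γ ≺_C Δ. -/
def critSucc (C : Formula) (Γ Δ : Set Formula) : Prop :=
  ∀ A : Formula, rhd A C ∈ Γ → A.neg ∈ Δ ∧ box A.neg ∈ Δ

/-- Box-inclusion Γ ⊆_Box Δ. -/
def boxSub (Γ Δ : Set Formula) : Prop :=
  ∀ A : Formula, box A ∈ Γ → box A ∈ Δ

namespace ILAux
open Formula

variable {Ax : Set Formula}

/-! ### Basic Hilbert combinators -/

theorem comp {x y z : Formula} (h1 : ILProof Ax (y.impl z)) (h2 : ILProof Ax (x.impl y)) :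
    ILProof Ax (x.impl z) :=
  ILProof.mp (ILProof.mp (ILProof.k2 x y z) (ILProof.mp (ILProof.k1 _ _) h1)) h2

theorem idt (x : Formula) : ILProof Ax (x.impl x) :=
  ILProof.mp (ILProof.mp (ILProof.k2 x (x.impl x) x) (ILProof.k1 _ _)) (ILProof.k1 _ _)

theorem flipr {x y z : Formula} (h : ILProof Ax (x.impl (y.impl z))) :
    ILProof Ax (y.impl (x.impl z)) :=
  comp (ILProof.mp (ILProof.k2 x y z) h) (ILProof.k1 _ _)

theorem flipt (x y z : Formula) :
    ILProof Ax ((x.impl (y.impl z)).impl (y.impl (x.impl z))) :=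
  flipr (comp (flipr (ILProof.k2 x y z)) (ILProof.k1 y x))

theorem monor (b : Formula) {x y : Formula} (h : ILProof Ax (x.impl y)) :
    ILProof Ax ((b.impl x).impl (b.impl y)) :=
  ILProof.mp (ILProof.k2 b x y) (ILProof.mp (ILProof.k1 _ _) h)

theorem swap_thm (a ψ : Formula) : ∀ L : List Formula,
    ILProof Ax ((L.foldr Formula.impl (a.impl ψ)).impl (a.impl (L.foldr Formula.impl ψ)))
  | [] => idt _
  | b :: L => comp (flipt b a (L.foldr Formula.impl ψ)) (monor b (swap_thm a ψ L))

/-! ### Proofs from hypotheses -/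

inductive DProof (Ax : Set Formula) (H : Set Formula) : Formula → Prop
  | hyp {φ} : φ ∈ H → DProof Ax H φ
  | thm {φ} : ILProof Ax φ → DProof Ax H φ
  | mp {φ ψ} : DProof Ax H (φ.impl ψ) → DProof Ax H φ → DProof Ax H ψ

theorem DProof.hyp' (φ : Formula) {H : Set Formula} (h : φ ∈ H := by simp) :
    DProof Ax H φ := DProof.hyp h

theorem DProof.ded {H : Set Formula} {φ ψ : Formula}
    (h : DProof Ax (insert φ H) ψ) : DProof Ax H (φ.impl ψ) := by
  induction h with
  | hyp hm =>
    rcases Set.mem_insert_iff.1 hm with rfl | hm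
    · exact DProof.thm (idt _)
    · exact DProof.mp (DProof.thm (ILProof.k1 _ _)) (DProof.hyp hm)
  | thm ht => exact DProof.mp (DProof.thm (ILProof.k1 _ _)) (DProof.thm ht)
  | mp _ _ ih1 ih2 => exact DProof.mp (DProof.mp (DProof.thm (ILProof.k2 _ _ _)) ih1) ih2

theorem DProof.cut {H H' : Set Formula} {φ : Formula}
    (h : DProof Ax H φ) (hall : ∀ ψ ∈ H, DProof Ax H' ψ) : DProof Ax H' φ := by
  induction h with
  | hyp hm => exact hall _ hm
  | thm ht => exact DProof.thm ht
  | mp _ _ ih1 ih2 => exact DProof.mp ih1 ih2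

theorem DProof.weaken {H H' : Set Formula} {φ : Formula}
    (h : DProof Ax H φ) (hs : H ⊆ H') : DProof Ax H' φ :=
  h.cut fun _ hm => DProof.hyp (hs hm)

theorem DProof.extract {H : Set Formula} {φ : Formula} (h : DProof Ax H φ) :
    ∃ L : List Formula, (∀ ψ ∈ L, ψ ∈ H) ∧ DProof Ax {x | x ∈ L} φ := by
  induction h with
  | hyp hm => exact ⟨[_], by simpa using hm, DProof.hyp (by simp)⟩
  | thm ht => exact ⟨[], by simp, DProof.thm ht⟩
  | mp _ _ ih1 ih2 =>
    obtain ⟨L1, hm1, h1⟩ := ih1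
    obtain ⟨L2, hm2, h2⟩ := ih2
    refine ⟨L1 ++ L2, ?_, DProof.mp (h1.weaken ?_) (h2.weaken ?_)⟩
    · intro ψ hψ
      rcases List.mem_append.1 hψ with h | h
      · exact hm1 ψ h
      · exact hm2 ψ h
    · intro x hx; exact List.mem_append.2 (Or.inl hx)
    · intro x hx; exact List.mem_append.2 (Or.inr hx)

theorem DProof.toIL {φ : Formula} (h : DProof Ax ∅ φ) : ILProof Ax φ := by
  induction h with
  | hyp hm => exact absurd hm (Set.notMem_empty _)
  | thm ht => exact ht
  | mp _ _ ih1 ih2 => exact ILProof.mp ih1 ih2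

theorem DProof.allfold {H : Set Formula} {φ : Formula} : ∀ {L : List Formula},
    DProof Ax H (L.foldr Formula.impl φ) → (∀ ψ ∈ L, ψ ∈ H) → DProof Ax H φ
  | [], h, _ => h
  | a :: L, h, hall =>
    DProof.allfold (L := L)
      (DProof.mp (by exact h) (DProof.hyp (hall a (List.mem_cons_self (a := a) (l := L)))))
      fun ψ hψ => hall ψ (List.mem_cons_of_mem a hψ)

theorem ofFold {L : List Formula} {φ : Formula}
    (h : ILProof Ax (L.foldr Formula.impl φ)) : DProof Ax {x | x ∈ L} φ :=
  DProof.allfold (DProof.thm h) fun _ hψ => hψ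

theorem toFold {φ : Formula} : ∀ {L : List Formula},
    DProof Ax {x | x ∈ L} φ → ILProof Ax (L.foldr Formula.impl φ) := by
  intro L
  induction L generalizing φ with
  | nil =>
    intro h
    apply DProof.toIL
    exact h.cut fun ψ hm => absurd hm (List.not_mem_nil (a := ψ))
  | cons a L ih =>
    intro h
    have h' : DProof Ax (insert a {x | x ∈ L}) φ := by
      apply h.weaken
      intro x hx
      rcases List.mem_cons.1 hx with rfl | hx
      · exact Set.mem_insert _ _
      · exact Set.mem_insert_of_mem _ hx
    exact ILProof.mp (swap_thm a φ L) (ih h'.ded)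

theorem consistent_iff {S : Set Formula} :
    Consistent Ax S ↔ ¬ DProof Ax S Formula.bot := by
  constructor
  · intro hc hd
    obtain ⟨L, hLmem, hL⟩ := hd.extract
    exact hc ⟨L, hLmem, toFold hL⟩
  · rintro hd ⟨L, hLmem, hL⟩
    exact hd ((ofFold hL).weaken fun x hx => hLmem x hx)

/-! ### Lindenbaum -/

theorem lindenbaum {S : Set Formula} (hS : ¬ DProof Ax S Formula.bot) :
    ∃ Δ : Set Formula, S ⊆ Δ ∧ MCS Ax Δ := by
  have hzorn := zorn_subset_nonempty {T : Set Formula | ¬ DProof Ax T Formula.bot} ?_ S hS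
  · obtain ⟨m, hSm, hmax⟩ := hzorn
    refine ⟨m, hSm, consistent_iff.2 hmax.prop, ?_⟩
    intro φ
    by_contra hcon
    push_neg at hcon
    have h1 : DProof Ax (insert φ m) Formula.bot := by
      by_contra hbad
      exact hcon.1 (hmax.2 hbad (Set.subset_insert _ _) (Set.mem_insert _ _))
    have h2 : DProof Ax (insert φ.neg m) Formula.bot := by
      by_contra hbad
      exact hcon.2 (hmax.2 hbad (Set.subset_insert _ _) (Set.mem_insert _ _))
    exact hmax.prop (DProof.mp h2.ded h1.ded)
  · intro c hc hchain hne
    refine ⟨⋃₀ c, ?_, fun s hs => Set.subset_sUnion_of_mem hs⟩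
    intro hd
    obtain ⟨L, hLmem, hL⟩ := hd.extract
    obtain ⟨t, htc, hall⟩ : ∃ t ∈ c, ∀ ψ ∈ L, ψ ∈ t := by
      clear hL
      induction L with
      | nil => exact ⟨hne.choose, hne.choose_spec, by simp⟩
      | cons a L ih =>
        obtain ⟨t, htc, hall⟩ := ih fun ψ hψ => hLmem ψ (List.mem_cons_of_mem a hψ)
        obtain ⟨t', ht'c, hat'⟩ := hLmem a (List.mem_cons_self (a := a) (l := L))
        rcases eq_or_ne t t' with rfl | hne'
        · exact ⟨t, htc, fun ψ hψ => by
            rcases List.mem_cons.1 hψ with rfl | hψ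
            · exact hat'
            · exact hall ψ hψ⟩
        rcases hchain htc ht'c hne' with hsub | hsub
        · exact ⟨t', ht'c, fun ψ hψ => by
            rcases List.mem_cons.1 hψ with rfl | hψ
            · exact hat'
            · exact hsub (hall ψ hψ)⟩
        · exact ⟨t, htc, fun ψ hψ => by
            rcases List.mem_cons.1 hψ with rfl | hψ
            · exact hsub hat'
            · exact hall ψ hψ⟩
    exact hc htc (hL.weaken fun x hx => hall x hx)

/-! ### Propositional lemmas -/

theorem efq (x : Formula) : ILProof Ax (Formula.bot.impl x) :=
  comp (ILProof.dne x) (ILProof.k1 Formula.bot x.neg)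

theorem dni (x : Formula) : ILProof Ax (x.impl x.neg.neg) :=
  DProof.toIL (DProof.ded (DProof.ded
    (DProof.mp (DProof.hyp' (Ax := Ax) (H := insert x.neg (insert x ∅)) x.neg)
      (DProof.hyp' x))))

theorem contrap {x y : Formula} (h : ILProof Ax (x.impl y)) :
    ILProof Ax (y.neg.impl x.neg) :=
  flipr (comp (dni y) h)

theorem conj_intro (x y : Formula) : ILProof Ax (x.impl (y.impl (x.conj y))) := by
  apply DProof.toIL
  apply DProof.ded; apply DProof.ded; apply DProof.ded
  exact DProof.mp (DProof.mp (DProof.hyp' (Ax := Ax)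
    (H := insert (x.impl y.neg) (insert y (insert x ∅))) (x.impl y.neg))
    (DProof.hyp' x)) (DProof.hyp' y)

theorem conj_elim1 (x y : Formula) : ILProof Ax ((x.conj y).impl x) := by
  have t : ILProof Ax (x.neg.impl (x.impl y.neg)) := by
    apply DProof.toIL
    apply DProof.ded; apply DProof.ded; apply DProof.ded
    exact DProof.mp (DProof.thm (efq Formula.bot))
      (DProof.mp (DProof.hyp' (Ax := Ax) (H := insert y (insert x (insert x.neg ∅))) x.neg)
        (DProof.hyp' x))
  apply DProof.toIL
  apply DProof.ded
  refine DProof.mp (DProof.thm (ILProof.dne x)) ?_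
  apply DProof.ded
  exact DProof.mp (DProof.hyp' (Ax := Ax) (H := insert x.neg (insert (x.conj y) ∅)) (x.conj y))
    (DProof.mp (DProof.thm t) (DProof.hyp' x.neg))

theorem conj_elim2 (x y : Formula) : ILProof Ax ((x.conj y).impl y) := by
  apply DProof.toIL
  apply DProof.ded
  refine DProof.mp (DProof.thm (ILProof.dne y)) ?_
  apply DProof.ded
  exact DProof.mp (DProof.hyp' (Ax := Ax) (H := insert y.neg (insert (x.conj y) ∅)) (x.conj y))
    (DProof.mp (DProof.thm (ILProof.k1 y.neg x)) (DProof.hyp' y.neg))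

theorem candr {x y : Formula} (h1 : ILProof Ax x) (h2 : ILProof Ax y) :
    ILProof Ax (x.conj y) :=
  ILProof.mp (ILProof.mp (conj_intro x y) h1) h2

theorem disj_intro1 (x y : Formula) : ILProof Ax (x.impl (x.disj y)) := by
  apply DProof.toIL
  apply DProof.ded; apply DProof.ded
  exact DProof.mp (DProof.thm (efq y))
    (DProof.mp (DProof.hyp' (Ax := Ax) (H := insert x.neg (insert x ∅)) x.neg)
      (DProof.hyp' x))

theorem disj_intro2 (x y : Formula) : ILProof Ax (y.impl (x.disj y)) :=
  ILProof.k1 y x.neg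

/-! ### Modal lemmas -/

theorem boxmono {x y : Formula} (h : ILProof Ax (x.impl y)) :
    ILProof Ax ((Formula.box x).impl (Formula.box y)) :=
  ILProof.mp (ILProof.L1 x y) (ILProof.nec h)

theorem rhd_of_imp {x y : Formula} (h : ILProof Ax (x.impl y)) :
    ILProof Ax (Formula.rhd x y) :=
  ILProof.mp (ILProof.J1 x y) (ILProof.nec h)

theorem rhd_trans {x y z : Formula} (h1 : ILProof Ax (Formula.rhd x y))
    (h2 : ILProof Ax (Formula.rhd y z)) : ILProof Ax (Formula.rhd x z) :=
  ILProof.mp (ILProof.J2 x y z) (candr h1 h2)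

theorem disj_dia_rhd (x : Formula) : ILProof Ax (Formula.rhd (x.disj x.dia) x) :=
  ILProof.mp (ILProof.J3 x x.dia x) (candr (rhd_of_imp (idt x)) (ILProof.J5 x))

theorem rhd_of_disj_dia {x y : Formula} (h : ILProof Ax (x.impl (y.disj y.dia))) :
    ILProof Ax (Formula.rhd x y) :=
  rhd_trans (rhd_of_imp h) (disj_dia_rhd y)

/-- GL: `□¬D → □¬A` for `D = A ∧ □¬A`. -/
theorem gl_step (A : Formula) :
    ILProof Ax ((Formula.box (A.conj (Formula.box A.neg)).neg).impl (Formula.box A.neg)) := by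
  set D := A.conj (Formula.box A.neg) with hD
  have t1 : ILProof Ax (D.neg.impl ((Formula.box A.neg).impl A.neg)) := by
    apply DProof.toIL
    apply DProof.ded; apply DProof.ded; apply DProof.ded
    refine DProof.mp (DProof.hyp' (Ax := Ax)
      (H := insert A (insert (Formula.box A.neg) (insert D.neg ∅))) D.neg) ?_
    exact DProof.mp (DProof.mp (DProof.thm (conj_intro A (Formula.box A.neg)))
      (DProof.hyp' A)) (DProof.hyp' (Formula.box A.neg))
  exact comp (ILProof.L3 A.neg) (boxmono t1)

/-- `⊢ A → D ∨ ◇D` for `D = A ∧ □¬A`. -/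
theorem a_to_d (A : Formula) :
    ILProof Ax (A.impl ((A.conj (Formula.box A.neg)).disj (A.conj (Formula.box A.neg)).dia)) := by
  set D := A.conj (Formula.box A.neg) with hD
  apply DProof.toIL
  apply DProof.ded; apply DProof.ded; apply DProof.ded
  have hboxA : DProof Ax (insert (Formula.box D.neg) (insert D.neg (insert A ∅)))
      (Formula.box A.neg) :=
    DProof.mp (DProof.thm (gl_step A)) (DProof.hyp' (Formula.box D.neg))
  refine DProof.mp (DProof.hyp' (Ax := Ax)
    (H := insert (Formula.box D.neg) (insert D.neg (insert A ∅))) D.neg) ?_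
  exact DProof.mp (DProof.mp (DProof.thm (conj_intro A (Formula.box A.neg)))
    (DProof.hyp' A)) hboxA

theorem a_rhd_d (A : Formula) :
    ILProof Ax (Formula.rhd A (A.conj (Formula.box A.neg))) :=
  rhd_of_disj_dia (a_to_d A)

/-- injection into iterated disjunction -/
theorem disj_inj {Cs : List Formula} {c : Formula} (hc : c ∈ Cs) :
    ILProof Ax (c.impl (Cs.foldr Formula.disj Formula.bot)) := by
  induction Cs with
  | nil => exact absurd hc (List.not_mem_nil (a := c))
  | cons a Cs ih =>
    rcases List.mem_cons.1 hc with rfl | hc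
    · exact disj_intro1 _ _
    · exact comp (disj_intro2 a _) (ih hc)


/-- Key lemma: if the list `L` of hypotheses drawn from `{A, □¬A} ∪ {¬c, □¬c : c ∈ Cs}`
is inconsistent, then `A ▷ ⋁Cs` is provable. -/
theorem a_rhd_c (A : Formula) (Cs L : List Formula)
    (hL : ILProof Ax (L.foldr Formula.impl Formula.bot))
    (hcases : ∀ ψ ∈ L, ψ = A ∨ ψ = Formula.box A.neg ∨
      ∃ c ∈ Cs, ψ = c.neg ∨ ψ = Formula.box c.neg) :
    ILProof Ax (Formula.rhd A (Cs.foldr Formula.disj Formula.bot)) := by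
  set C := Cs.foldr Formula.disj Formula.bot with hC
  set G := C.disj C.dia with hG
  set D := A.conj (Formula.box A.neg) with hD
  set E := A.conj ((Formula.box A.neg).conj G.neg) with hE
  have hEbot : ILProof Ax (E.impl Formula.bot) := by
    apply DProof.toIL; apply DProof.ded
    have hEH : DProof Ax (insert E ∅) E := DProof.hyp' E
    have eA : DProof Ax (insert E ∅) A := DProof.mp (DProof.thm (conj_elim1 _ _)) hEH
    have e2 := DProof.mp (DProof.thm (conj_elim2 A ((Formula.box A.neg).conj G.neg))) hEH
    have eB : DProof Ax (insert E ∅) (Formula.box A.neg) :=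
      DProof.mp (DProof.thm (conj_elim1 _ _)) e2
    have eNG : DProof Ax (insert E ∅) G.neg :=
      DProof.mp (DProof.thm (conj_elim2 _ _)) e2
    refine DProof.cut (ofFold hL) ?_
    intro ψ hψ
    rcases hcases ψ hψ with rfl | rfl | ⟨c, hc, rfl | rfl⟩
    · exact eA
    · exact eB
    · have hcG : ILProof Ax (c.impl G) := comp (disj_intro1 C C.dia) (disj_inj hc)
      exact DProof.mp (DProof.thm (contrap hcG)) eNG
    · have h1 : ILProof Ax (G.neg.impl (Formula.box C.neg)) :=
        comp (ILProof.dne (Formula.box C.neg)) (contrap (disj_intro2 C C.dia))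
      have h2 : ILProof Ax ((Formula.box C.neg).impl (Formula.box c.neg)) :=
        boxmono (contrap (disj_inj hc))
      exact DProof.mp (DProof.thm (comp h2 h1)) eNG
  have hDG : ILProof Ax (D.impl G) := by
    apply DProof.toIL; apply DProof.ded
    refine DProof.mp (DProof.thm (ILProof.dne G)) ?_
    apply DProof.ded
    have hDH : DProof Ax (insert G.neg (insert D ∅)) D := DProof.hyp' D
    have eA := DProof.mp (DProof.thm (conj_elim1 A (Formula.box A.neg))) hDH
    have eB := DProof.mp (DProof.thm (conj_elim2 A (Formula.box A.neg))) hDH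
    have inner := DProof.mp (DProof.mp (DProof.thm (conj_intro (Formula.box A.neg) G.neg)) eB)
      (DProof.hyp' G.neg)
    have eE := DProof.mp (DProof.mp (DProof.thm (conj_intro A ((Formula.box A.neg).conj G.neg)))
      eA) inner
    exact DProof.mp (DProof.thm hEbot) eE
  exact rhd_trans (a_rhd_d A) (rhd_of_disj_dia hDG)

theorem rhd_fold {B : Formula} {Γ : Set Formula} :
    ∀ {Cs : List Formula}, (∀ c ∈ Cs, Formula.rhd c B ∈ Γ) →
      DProof Ax Γ (Formula.rhd (Cs.foldr Formula.disj Formula.bot) B)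
  | [], _ => DProof.thm (rhd_of_imp (efq B))
  | c :: Cs, hall =>
    DProof.mp (DProof.thm (ILProof.J3 c (Cs.foldr Formula.disj Formula.bot) B))
      (DProof.mp (DProof.mp (DProof.thm (conj_intro _ _))
        (DProof.hyp (hall c (List.mem_cons_self (a := c) (l := Cs)))))
        (rhd_fold fun c' hc' => hall c' (List.mem_cons_of_mem c hc')))

end ILAux


/-- if ¬(A ▷ B) ∈ Γ then there is an MCS Δ with Γ ≺_B Δ ∋ A, Box ¬A. -/
theorem problem_elimination (Ax : Set Formula) (A B : Formula) (Γ : Set Formula)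
    (hΓ : MCS Ax Γ) (h : (Formula.rhd A B).neg ∈ Γ) :
    ∃ Δ : Set Formula, MCS Ax Δ ∧ critSucc B Γ Δ ∧ A ∈ Δ ∧ Formula.box A.neg ∈ Δ := by
  classical
  obtain ⟨hΓcons, hΓcomp⟩ := hΓ
  have hΓD : ¬ ILAux.DProof Ax Γ Formula.bot := ILAux.consistent_iff.1 hΓcons
  set S0 : Set Formula := insert A (insert (Formula.box A.neg)
    {ψ | ∃ c, Formula.rhd c B ∈ Γ ∧ (ψ = c.neg ∨ ψ = Formula.box c.neg)}) with hS0
  have hS0cons : ¬ ILAux.DProof Ax S0 Formula.bot := by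
    intro hd
    obtain ⟨L, hLmem, hL⟩ := hd.extract
    have hfold := ILAux.toFold hL
    obtain ⟨Cs, hCsΓ, hcov⟩ : ∃ Cs : List Formula, (∀ c ∈ Cs, Formula.rhd c B ∈ Γ) ∧
        ∀ ψ ∈ L, ψ = A ∨ ψ = Formula.box A.neg ∨
          ∃ c ∈ Cs, ψ = c.neg ∨ ψ = Formula.box c.neg := by
      clear hL hfold
      induction L with
      | nil => exact ⟨[], by simp, by simp⟩
      | cons a L ih =>
        obtain ⟨Cs, h1, h2⟩ := ih fun ψ hψ => hLmem ψ (List.mem_cons_of_mem a hψ)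
        have ha := hLmem a (List.mem_cons_self (a := a) (l := L))
        simp only [hS0, Set.mem_insert_iff, Set.mem_setOf_eq] at ha
        rcases ha with rfl | rfl | ⟨c, hcΓ, hc⟩
        · refine ⟨Cs, h1, fun ψ hψ => ?_⟩
          rcases List.mem_cons.1 hψ with rfl | hψ
          · exact Or.inl rfl
          · exact h2 ψ hψ
        · refine ⟨Cs, h1, fun ψ hψ => ?_⟩
          rcases List.mem_cons.1 hψ with rfl | hψ
          · exact Or.inr (Or.inl rfl)
          · exact h2 ψ hψ
        · refine ⟨c :: Cs, fun c' hc' => ?_, fun ψ hψ => ?_⟩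
          · rcases List.mem_cons.1 hc' with rfl | hc'
            · exact hcΓ
            · exact h1 c' hc'
          · rcases List.mem_cons.1 hψ with rfl | hψ
            · exact Or.inr (Or.inr ⟨c, List.mem_cons_self, hc⟩)
            · rcases h2 ψ hψ with h' | h' | ⟨c', hc', hx⟩
              · exact Or.inl h'
              · exact Or.inr (Or.inl h')
              · exact Or.inr (Or.inr ⟨c', List.mem_cons_of_mem _ hc', hx⟩)
    have hAC := ILAux.a_rhd_c (Ax := Ax) A Cs L hfold hcov
    have hCB : ILAux.DProof Ax Γ (Formula.rhd (Cs.foldr Formula.disj Formula.bot) B) :=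
      ILAux.rhd_fold hCsΓ
    have hAB : ILAux.DProof Ax Γ (Formula.rhd A B) :=
      ILAux.DProof.mp (ILAux.DProof.thm (ILProof.J2 A (Cs.foldr Formula.disj Formula.bot) B))
        (ILAux.DProof.mp (ILAux.DProof.mp (ILAux.DProof.thm (ILAux.conj_intro _ _))
          (ILAux.DProof.thm hAC)) hCB)
    exact hΓD (ILAux.DProof.mp (ILAux.DProof.hyp h) hAB)
  obtain ⟨Δ, hsub, hMCS⟩ := ILAux.lindenbaum hS0cons
  refine ⟨Δ, hMCS, ?_, hsub (Set.mem_insert _ _),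
    hsub (Set.mem_insert_of_mem _ (Set.mem_insert _ _))⟩
  intro A' hA'
  exact ⟨hsub (Set.mem_insert_of_mem _ (Set.mem_insert_of_mem _ ⟨A', hA', Or.inl rfl⟩)),
    hsub (Set.mem_insert_of_mem _ (Set.mem_insert_of_mem _ ⟨A', hA', Or.inr rfl⟩))⟩
end

section
/- Let Γ, Δ be maximal IL(X)-consistent sets with C ▷ D ∈ Γ, Γ ≺_B Δ, and C ∈ Δ. Then there exists a maximal IL(X)-consistent set Δ' with Γ ≺_B Δ' and D ∈ Δ' and Box ¬D ∈ Δ'. -/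
open Formula

section ILAux

open Formula

/-- Derivability from a finite list of hypotheses. -/
def Der (Ax : Set Formula) (L : List Formula) (φ : Formula) : Prop :=
  ILProof Ax (L.foldr Formula.impl φ)

variable {Ax : Set Formula} {L M : List Formula} {φ ψ χ : Formula}

theorem der_of_prov (h : ILProof Ax φ) : Der Ax L φ := by
  induction L with
  | nil => exact h
  | cons a L ih => exact ILProof.mp (ILProof.k1 _ _) ih

theorem imp_id (φ : Formula) : ILProof Ax (φ.impl φ) :=
  ILProof.mp (ILProof.mp (ILProof.k2 φ (φ.impl φ) φ) (ILProof.k1 _ _)) (ILProof.k1 _ _)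

theorem prov_comp (h1 : ILProof Ax (φ.impl ψ)) (h2 : ILProof Ax (ψ.impl χ)) :
    ILProof Ax (φ.impl χ) :=
  ILProof.mp (ILProof.mp (ILProof.k2 φ ψ χ) (ILProof.mp (ILProof.k1 _ _) h2)) h1

theorem foldr_k2 (L : List Formula) (φ ψ : Formula) :
    ILProof Ax ((L.foldr .impl (φ.impl ψ)).impl ((L.foldr .impl φ).impl (L.foldr .impl ψ))) := by
  induction L with
  | nil => exact imp_id _
  | cons a L ih =>
    exact prov_comp (ILProof.mp (ILProof.k2 a _ _) (ILProof.mp (ILProof.k1 _ _) ih))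
      (ILProof.k2 a _ _)

theorem der_mp (h1 : Der Ax L (φ.impl ψ)) (h2 : Der Ax L φ) : Der Ax L ψ :=
  ILProof.mp (ILProof.mp (foldr_k2 L φ ψ) h1) h2

theorem prov_lift (h : ILProof Ax (φ.impl ψ)) : ILProof Ax ((χ.impl φ).impl (χ.impl ψ)) :=
  ILProof.mp (ILProof.k2 χ φ ψ) (ILProof.mp (ILProof.k1 _ _) h)

theorem der_imp_self : ILProof Ax (φ.impl (L.foldr .impl φ)) := by
  induction L with
  | nil => exact imp_id φ
  | cons a L ih => exact prov_comp ih (ILProof.k1 _ _)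

theorem der_hyp (h : φ ∈ L) : Der Ax L φ := by
  induction L with
  | nil => exact absurd h (List.not_mem_nil)
  | cons a L ih =>
    rcases List.mem_cons.1 h with rfl | h
    · exact der_imp_self
    · exact ILProof.mp (ILProof.k1 _ _) (ih h)

theorem der_cut' (h : Der Ax M (L.foldr .impl φ)) (hall : ∀ ψ ∈ L, Der Ax M ψ) :
    Der Ax M φ := by
  induction L with
  | nil => exact h
  | cons a L ih =>
    exact ih (der_mp h (hall a (List.mem_cons_self)))
      (fun ψ hψ => hall ψ (List.mem_cons_of_mem _ hψ))

theorem der_cut (hall : ∀ ψ ∈ L, Der Ax M ψ) (h : Der Ax L φ) : Der Ax M φ :=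
  der_cut' (der_of_prov h) hall


theorem der_append : Der Ax (L ++ [φ]) ψ ↔ Der Ax L (φ.impl ψ) := by
  unfold Der; rw [List.foldr_append]; exact Iff.rfl

-- Propositional lemmas
theorem efq (φ : Formula) : ILProof Ax (Formula.bot.impl φ) := by
  show Der Ax [Formula.bot] φ
  have h : Der Ax [Formula.bot] Formula.bot := der_hyp (by simp)
  exact der_mp (der_of_prov (ILProof.dne φ))
    (der_mp (der_of_prov (ILProof.k1 Formula.bot φ.neg)) h)

theorem case_split (φ ψ : Formula) :
    ILProof Ax ((φ.impl ψ).impl ((φ.neg.impl ψ).impl ψ)) := by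
  show Der Ax [φ.impl ψ, φ.neg.impl ψ] ψ
  have h1 : Der Ax [φ.impl ψ, φ.neg.impl ψ, ψ.neg] (φ.impl ψ) := der_hyp (by simp)
  have h2 : Der Ax [φ.impl ψ, φ.neg.impl ψ, ψ.neg] (φ.neg.impl ψ) := der_hyp (by simp)
  have h3 : Der Ax [φ.impl ψ, φ.neg.impl ψ, ψ.neg] ψ.neg := der_hyp (by simp)
  have hnφ : Der Ax [φ.impl ψ, φ.neg.impl ψ, ψ.neg] φ.neg :=
    der_mp (der_mp (der_of_prov (ILProof.k2 φ ψ Formula.bot))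
      (der_mp (der_of_prov (ILProof.k1 _ φ)) h3)) h1
  have hbot : Der Ax [φ.impl ψ, φ.neg.impl ψ, ψ.neg] Formula.bot :=
    der_mp h3 (der_mp h2 hnφ)
  exact der_mp (der_of_prov (ILProof.dne ψ)) hbot

theorem conj_intro (φ ψ : Formula) : ILProof Ax (φ.impl (ψ.impl (φ.conj ψ))) := by
  show Der Ax [φ, ψ, φ.impl ψ.neg] Formula.bot
  have h1 : Der Ax [φ, ψ, φ.impl ψ.neg] φ := der_hyp (by simp)
  have h2 : Der Ax [φ, ψ, φ.impl ψ.neg] ψ := der_hyp (by simp)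
  have h3 : Der Ax [φ, ψ, φ.impl ψ.neg] (φ.impl ψ.neg) := der_hyp (by simp)
  exact der_mp (der_mp h3 h1) h2

theorem conj_elim1 (φ ψ : Formula) : ILProof Ax ((φ.conj ψ).impl φ) := by
  show Der Ax [φ.conj ψ] φ
  have h1 : Der Ax [φ.conj ψ, φ.neg] (φ.conj ψ) := der_hyp (by simp [Formula.conj])
  have h2 : Der Ax [φ.conj ψ, φ.neg] φ.neg := der_hyp (by simp [Formula.conj])
  have himp : Der Ax [φ.conj ψ, φ.neg] (φ.impl ψ.neg) :=
    der_mp (der_mp (der_of_prov (ILProof.k2 φ Formula.bot ψ.neg))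
      (der_mp (der_of_prov (ILProof.k1 _ φ)) (der_of_prov (efq ψ.neg)))) h2
  have hbot : Der Ax [φ.conj ψ, φ.neg] Formula.bot := der_mp h1 himp
  exact der_mp (der_of_prov (ILProof.dne φ)) hbot

theorem conj_elim2 (φ ψ : Formula) : ILProof Ax ((φ.conj ψ).impl ψ) := by
  show Der Ax [φ.conj ψ] ψ
  have h1 : Der Ax [φ.conj ψ, ψ.neg] (φ.conj ψ) := der_hyp (by simp [Formula.conj])
  have h2 : Der Ax [φ.conj ψ, ψ.neg] ψ.neg := der_hyp (by simp [Formula.conj])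
  have hbot : Der Ax [φ.conj ψ, ψ.neg] Formula.bot :=
    der_mp h1 (der_mp (der_of_prov (ILProof.k1 ψ.neg φ)) h2)
  exact der_mp (der_of_prov (ILProof.dne ψ)) hbot

theorem disj_inl (φ ψ : Formula) : ILProof Ax (φ.impl (φ.disj ψ)) := by
  show Der Ax [φ, φ.neg] ψ
  have h1 : Der Ax [φ, φ.neg] φ := der_hyp (by simp)
  have h2 : Der Ax [φ, φ.neg] φ.neg := der_hyp (by simp)
  exact der_mp (der_of_prov (efq ψ)) (der_mp h2 h1)

theorem disj_inr (φ ψ : Formula) : ILProof Ax (ψ.impl (φ.disj ψ)) := ILProof.k1 _ _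

-- Modal lemmas
theorem box_mono {φ ψ : Formula} (h : ILProof Ax (φ.impl ψ)) :
    ILProof Ax ((Formula.box φ).impl (Formula.box ψ)) :=
  ILProof.mp (ILProof.L1 φ ψ) (ILProof.nec h)

theorem rhd_of_imp {φ ψ : Formula} (h : ILProof Ax (φ.impl ψ)) :
    ILProof Ax (Formula.rhd φ ψ) :=
  ILProof.mp (ILProof.J1 φ ψ) (ILProof.nec h)

theorem rhd_trans_prov {φ ψ χ : Formula} (h1 : ILProof Ax (Formula.rhd φ ψ))
    (h2 : ILProof Ax (Formula.rhd ψ χ)) : ILProof Ax (Formula.rhd φ χ) :=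
  ILProof.mp (ILProof.J2 φ ψ χ)
    (ILProof.mp (ILProof.mp (conj_intro _ _) h1) h2)

/-- Löb: `⊢ □¬(D ∧ □¬D) → □¬D`. -/
theorem loeb_dia (D : Formula) :
    ILProof Ax ((Formula.box (D.conj (Formula.box D.neg)).neg).impl (Formula.box D.neg)) := by
  have hp : ILProof Ax ((D.conj (Formula.box D.neg)).neg.impl
      ((Formula.box D.neg).impl D.neg)) := by
    show Der Ax [(D.conj (Formula.box D.neg)).neg, Formula.box D.neg, D] Formula.bot
    have h1 : Der Ax [(D.conj (Formula.box D.neg)).neg, Formula.box D.neg, D]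
        ((D.conj (Formula.box D.neg)).neg) := der_hyp (by simp)
    have h2 : Der Ax [(D.conj (Formula.box D.neg)).neg, Formula.box D.neg, D]
        (Formula.box D.neg) := der_hyp (by simp)
    have h3 : Der Ax [(D.conj (Formula.box D.neg)).neg, Formula.box D.neg, D] D :=
      der_hyp (by simp)
    exact der_mp h1 (der_mp (der_mp (der_of_prov (conj_intro _ _)) h3) h2)
  exact prov_comp (box_mono hp) (ILProof.L3 D.neg)

/-- `⊢ D → (K ∨ ◇K)` where `K = D ∧ □¬D`. -/
theorem to_deficiency (D : Formula) :
    ILProof Ax (D.impl ((D.conj (Formula.box D.neg)).disj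
      (Formula.dia (D.conj (Formula.box D.neg))))) := by
  set K := D.conj (Formula.box D.neg) with hK
  have h1 : Der Ax [D] ((Formula.box K.neg).impl (K.disj K.dia)) := by
    show Der Ax [D, Formula.box K.neg] (K.disj K.dia)
    have hD : Der Ax [D, Formula.box K.neg] D := der_hyp (by simp)
    have hb : Der Ax [D, Formula.box K.neg] (Formula.box K.neg) := der_hyp (by simp)
    exact der_mp (der_of_prov (disj_inl _ _))
      (der_mp (der_mp (der_of_prov (conj_intro _ _)) hD)
        (der_mp (der_of_prov (loeb_dia D)) hb))
  have h2 : Der Ax [D] ((Formula.box K.neg).neg.impl (K.disj K.dia)) := by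
    show Der Ax [D, (Formula.box K.neg).neg] (K.disj K.dia)
    have hb : Der Ax [D, (Formula.box K.neg).neg] K.dia := der_hyp (by simp [Formula.dia])
    exact der_mp (der_of_prov (disj_inr _ _)) hb
  exact der_mp (der_mp (der_of_prov (case_split _ _)) h1) h2

/-- `⊢ D ▷ (D ∧ □¬D)`. -/
theorem rhd_deficiency (D : Formula) :
    ILProof Ax (Formula.rhd D (D.conj (Formula.box D.neg))) := by
  set K := D.conj (Formula.box D.neg) with hK
  have h1 : ILProof Ax (Formula.rhd D (K.disj K.dia)) := rhd_of_imp (to_deficiency D)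
  have h2 : ILProof Ax (Formula.rhd (K.disj K.dia) K) :=
    ILProof.mp (ILProof.J3 K K.dia K)
      (ILProof.mp (ILProof.mp (conj_intro _ _) (rhd_of_imp (imp_id K))) (ILProof.J5 K))
  exact rhd_trans_prov h1 h2
-- MCS basic facts
theorem mcs_thm {Γ : Set Formula} (h : MCS Ax Γ) (hp : ILProof Ax φ) : φ ∈ Γ := by
  rcases h.2 φ with hφ | hφ
  · exact hφ
  · exfalso
    refine h.1 ⟨[φ.neg], ?_, ?_⟩
    · intro ψ hψ; rw [List.mem_singleton] at hψ; subst hψ; exact hφ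
    exact der_mp (der_hyp (L := [φ.neg]) (by simp [Formula.neg])) (der_of_prov hp)

theorem mcs_mp_thm {Γ : Set Formula} (h : MCS Ax Γ) (hp : ILProof Ax (φ.impl ψ))
    (hφ : φ ∈ Γ) : ψ ∈ Γ := by
  rcases h.2 ψ with hψ | hψ
  · exact hψ
  · exfalso
    refine h.1 ⟨[φ, ψ.neg], by simp [hφ, hψ], ?_⟩
    have h1 : Der Ax [φ, ψ.neg] φ := der_hyp (by simp)
    have h2 : Der Ax [φ, ψ.neg] ψ.neg := der_hyp (by simp)
    exact der_mp h2 (der_mp (der_of_prov hp) h1)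

theorem mcs_mp2_thm {Γ : Set Formula} (h : MCS Ax Γ) (hp : ILProof Ax (φ.impl (ψ.impl χ)))
    (hφ : φ ∈ Γ) (hψ : ψ ∈ Γ) : χ ∈ Γ := by
  rcases h.2 χ with hχ | hχ
  · exact hχ
  · exfalso
    refine h.1 ⟨[φ, ψ, χ.neg], by simp [hφ, hψ, hχ], ?_⟩
    have h1 : Der Ax [φ, ψ, χ.neg] φ := der_hyp (by simp)
    have h2 : Der Ax [φ, ψ, χ.neg] ψ := der_hyp (by simp)
    have h3 : Der Ax [φ, ψ, χ.neg] χ.neg := der_hyp (by simp)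
    exact der_mp h3 (der_mp (der_mp (der_of_prov hp) h1) h2)

theorem mcs_not_both {Γ : Set Formula} (h : MCS Ax Γ) (h1 : φ ∈ Γ) (h2 : φ.neg ∈ Γ) :
    False := by
  refine h.1 ⟨[φ, φ.neg], by simp [h1, h2], ?_⟩
  exact der_mp (der_hyp (L := [φ, φ.neg]) (φ := φ.neg) (by simp))
    (der_hyp (L := [φ, φ.neg]) (by simp))

/-- From inconsistency of `insert φ m`, derive `¬φ` from a finite subset of `m`. -/
theorem neg_derivable {m : Set Formula} (h : ¬ Consistent Ax (insert φ m)) :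
    ∃ L : List Formula, (∀ ψ ∈ L, ψ ∈ m) ∧ Der Ax L φ.neg := by
  classical
  rw [Consistent, not_not] at h
  obtain ⟨L0, hmem, hp⟩ := h
  set L := L0.filter (fun ψ => decide (ψ ∈ m)) with hL
  refine ⟨L, ?_, ?_⟩
  · intro ψ hψ
    rw [hL, List.mem_filter] at hψ
    exact of_decide_eq_true hψ.2
  · show Der Ax L (φ.impl Formula.bot)
    rw [← der_append]
    refine der_cut (fun ψ hψ => der_hyp ?_) hp
    rcases hmem ψ hψ with rfl | hm
    · simp
    · simp only [List.mem_append, List.mem_singleton]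
      left; rw [hL, List.mem_filter]; exact ⟨hψ, by simp [hm]⟩

/-- Every finite subset of a nonempty chain union is contained in one member. -/
theorem chain_bound {c : Set (Set Formula)} (hc : IsChain (· ⊆ ·) c) (hne : c.Nonempty)
    (L : List Formula) (hmem : ∀ ψ ∈ L, ψ ∈ ⋃₀ c) :
    ∃ t ∈ c, ∀ ψ ∈ L, ψ ∈ t := by
  induction L with
  | nil => exact ⟨hne.choose, hne.choose_spec, by simp⟩
  | cons a L ih =>
    obtain ⟨t, htc, ht⟩ := ih (fun ψ hψ => hmem ψ (List.mem_cons_of_mem _ hψ))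
    obtain ⟨s, hsc, hsa⟩ := hmem a (List.mem_cons_self)
    have key : ∀ u ∈ c, a ∈ u → (∀ ψ ∈ L, ψ ∈ u) → ∃ t ∈ c, ∀ ψ ∈ a :: L, ψ ∈ t := by
      intro u huc hau hLu
      refine ⟨u, huc, fun ψ hψ => ?_⟩
      rcases List.mem_cons.1 hψ with rfl | h
      · exact hau
      · exact hLu ψ h
    rcases eq_or_ne s t with rfl | hst
    · exact key s hsc hsa ht
    rcases hc hsc htc hst with hsub | hsub
    · exact key t htc (hsub hsa) ht
    · exact key s hsc hsa (fun ψ hψ => hsub (ht ψ hψ))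

/-- Lindenbaum's lemma. -/
theorem lindenbaum {Θ : Set Formula} (h : Consistent Ax Θ) :
    ∃ Δ' : Set Formula, MCS Ax Δ' ∧ Θ ⊆ Δ' := by
  obtain ⟨m, hΘm, hmax⟩ := zorn_subset_nonempty {Γ : Set Formula | Consistent Ax Γ}
    (fun c hcS hc hne => by
      refine ⟨⋃₀ c, ?_, fun s hs => Set.subset_sUnion_of_mem hs⟩
      rintro ⟨L, hmem, hp⟩
      obtain ⟨t, htc, ht⟩ := chain_bound hc hne L hmem
      exact hcS htc ⟨L, ht, hp⟩) Θ h
  refine ⟨m, ⟨hmax.1, ?_⟩, hΘm⟩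
  intro φ
  by_contra hcon
  push_neg at hcon
  have hins : ∀ ρ : Formula, ρ ∉ m → ¬ Consistent Ax (insert ρ m) := by
    intro ρ hρ hconsis
    exact hρ (hmax.2 hconsis (Set.subset_insert ρ m) (Set.mem_insert ρ m))
  obtain ⟨L1, hL1, hd1⟩ := neg_derivable (hins φ hcon.1)
  obtain ⟨L2, hL2, hd2⟩ := neg_derivable (hins φ.neg hcon.2)
  refine hmax.1 ⟨L1 ++ L2, ?_, ?_⟩
  · intro ψ hψ
    rcases List.mem_append.1 hψ with h | h
    · exact hL1 ψ h
    · exact hL2 ψ h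
  have d1 : Der Ax (L1 ++ L2) φ.neg :=
    der_cut (fun ψ hψ => der_hyp (List.mem_append_left _ hψ)) hd1
  have d2 : Der Ax (L1 ++ L2) φ.neg.neg :=
    der_cut (fun ψ hψ => der_hyp (List.mem_append_right _ hψ)) hd2
  exact der_mp d2 d1
theorem foldr_disj_rhd {Γ : Set Formula} (h : MCS Ax Γ) (B : Formula) (As : List Formula)
    (hAs : ∀ A ∈ As, Formula.rhd A B ∈ Γ) :
    Formula.rhd (As.foldr Formula.disj Formula.bot) B ∈ Γ := by
  induction As with
  | nil => exact mcs_thm h (rhd_of_imp (efq B))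
  | cons A As ih =>
    have h1 : Formula.rhd A B ∈ Γ := hAs A (List.mem_cons_self)
    have h2 := ih (fun A' hA' => hAs A' (List.mem_cons_of_mem _ hA'))
    set E' := As.foldr Formula.disj Formula.bot with hE'
    have thm : ILProof Ax ((Formula.rhd A B).impl ((Formula.rhd E' B).impl
        (Formula.rhd (A.disj E') B))) := by
      show Der Ax [Formula.rhd A B, Formula.rhd E' B] (Formula.rhd (A.disj E') B)
      have hh1 : Der Ax [Formula.rhd A B, Formula.rhd E' B] (Formula.rhd A B) :=
        der_hyp (by simp)
      have hh2 : Der Ax [Formula.rhd A B, Formula.rhd E' B] (Formula.rhd E' B) :=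
        der_hyp (by simp)
      exact der_mp (der_of_prov (ILProof.J3 A E' B))
        (der_mp (der_mp (der_of_prov (conj_intro _ _)) hh1) hh2)
    exact mcs_mp2_thm h thm h1 h2

theorem mem_foldr_disj {As : List Formula} {A : Formula} (hA : A ∈ As) :
    ILProof Ax (A.impl (As.foldr Formula.disj Formula.bot)) := by
  induction As with
  | nil => exact absurd hA (List.not_mem_nil)
  | cons A' As ih =>
    rcases List.mem_cons.1 hA with rfl | hA
    · exact disj_inl _ _
    · exact prov_comp (ih hA) (disj_inr _ _)

theorem extract_list {Γ : Set Formula} {B D : Formula} (L : List Formula)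
    (hmem : ∀ ψ ∈ L, ψ = D ∨ ψ = Formula.box D.neg ∨
      ∃ A, Formula.rhd A B ∈ Γ ∧ (ψ = A.neg ∨ ψ = Formula.box A.neg)) :
    ∃ As : List Formula, (∀ A ∈ As, Formula.rhd A B ∈ Γ) ∧
      ∀ ψ ∈ L, ψ = D ∨ ψ = Formula.box D.neg ∨
        ∃ A ∈ As, ψ = A.neg ∨ ψ = Formula.box A.neg := by
  induction L with
  | nil => exact ⟨[], by simp, by simp⟩
  | cons a L ih =>
    obtain ⟨As, hAs, hLs⟩ := ih (fun ψ hψ => hmem ψ (List.mem_cons_of_mem _ hψ))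
    rcases hmem a (List.mem_cons_self) with rfl | h | ⟨A, hAB, hor⟩
    · refine ⟨As, hAs, fun ψ hψ => ?_⟩
      rcases List.mem_cons.1 hψ with rfl | hψ
      · exact Or.inl rfl
      · exact hLs ψ hψ
    · refine ⟨As, hAs, fun ψ hψ => ?_⟩
      rcases List.mem_cons.1 hψ with rfl | hψ
      · exact Or.inr (Or.inl h)
      · exact hLs ψ hψ
    · refine ⟨A :: As, ?_, fun ψ hψ => ?_⟩
      · intro A' hA'
        rcases List.mem_cons.1 hA' with rfl | hA'
        · exact hAB
        · exact hAs A' hA'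
      · rcases List.mem_cons.1 hψ with rfl | hψ
        · exact Or.inr (Or.inr ⟨A, List.mem_cons_self, hor⟩)
        · rcases hLs ψ hψ with h1 | h1 | ⟨A', hA', h1⟩
          · exact Or.inl h1
          · exact Or.inr (Or.inl h1)
          · exact Or.inr (Or.inr ⟨A', List.mem_cons_of_mem _ hA', h1⟩)

end ILAux
/-- if C ▷ D ∈ Γ ≺_B Δ ∋ C then there is Δ' with Γ ≺_B Δ' ∋ D, Box ¬D. -/
theorem deficiency_elimination (Ax : Set Formula) (B C D : Formula) (Γ Δ : Set Formula)
    (hΓ : MCS Ax Γ) (hΔ : MCS Ax Δ)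
    (hCD : Formula.rhd C D ∈ Γ) (hcrit : critSucc B Γ Δ) (hC : C ∈ Δ) :
    ∃ Δ' : Set Formula, MCS Ax Δ' ∧ critSucc B Γ Δ' ∧ D ∈ Δ' ∧ Formula.box D.neg ∈ Δ' := by
  classical
  set Θ : Set Formula := insert D (insert (Formula.box D.neg)
    {ψ | ∃ A, Formula.rhd A B ∈ Γ ∧ (ψ = A.neg ∨ ψ = Formula.box A.neg)}) with hΘdef
  have hcons : Consistent Ax Θ := by
    rintro ⟨L, hmem, hp⟩
    obtain ⟨As, hAs, hLs⟩ := extract_list (Γ := Γ) (B := B) (D := D) L (by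
      intro ψ hψ
      rcases hmem ψ hψ with rfl | rfl | hS
      · exact Or.inl rfl
      · exact Or.inr (Or.inl rfl)
      · exact Or.inr (Or.inr hS))
    set E : Formula := As.foldr Formula.disj Formula.bot with hEdef
    have hEB : Formula.rhd E B ∈ Γ := foldr_disj_rhd hΓ B As hAs
    set M : List Formula := [D, Formula.box D.neg, E.neg, Formula.box E.neg] with hMdef
    have hMbot : Der Ax M Formula.bot := by
      refine der_cut (fun ψ hψ => ?_) hp
      rcases hLs ψ hψ with rfl | rfl | ⟨A, hA, hor⟩
      · exact der_hyp (by simp [hMdef])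
      · exact der_hyp (by simp [hMdef])
      · have himpE : ILProof Ax (A.impl E) := mem_foldr_disj hA
        have hnn : ILProof Ax (E.neg.impl A.neg) := by
          show Der Ax [E.neg, A] Formula.bot
          have hE1 : Der Ax [E.neg, A] E.neg := der_hyp (by simp)
          have hA1 : Der Ax [E.neg, A] A := der_hyp (by simp)
          exact der_mp hE1 (der_mp (der_of_prov himpE) hA1)
        have hEn : Der Ax M E.neg := der_hyp (by simp [hMdef])
        have hbEn : Der Ax M (Formula.box E.neg) := der_hyp (by simp [hMdef])
        rcases hor with rfl | rfl
        · exact der_mp (der_of_prov hnn) hEn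
        · exact der_mp (der_of_prov (box_mono hnn)) hbEn
    have hKimp : ILProof Ax ((D.conj (Formula.box D.neg)).impl (E.disj E.dia)) := by
      show Der Ax [D.conj (Formula.box D.neg), E.neg, Formula.box E.neg] Formula.bot
      have hK : Der Ax [D.conj (Formula.box D.neg), E.neg, Formula.box E.neg]
          (D.conj (Formula.box D.neg)) := der_hyp (by simp)
      have hEn : Der Ax [D.conj (Formula.box D.neg), E.neg, Formula.box E.neg] E.neg :=
        der_hyp (by simp)
      have hbEn : Der Ax [D.conj (Formula.box D.neg), E.neg, Formula.box E.neg]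
          (Formula.box E.neg) := der_hyp (by simp)
      have hD1 := der_mp (der_of_prov (conj_elim1 D (Formula.box D.neg))) hK
      have hD2 := der_mp (der_of_prov (conj_elim2 D (Formula.box D.neg))) hK
      exact der_mp (der_mp (der_mp (der_mp (der_of_prov
        (hMbot : ILProof Ax (D.impl ((Formula.box D.neg).impl
          (E.neg.impl ((Formula.box E.neg).impl Formula.bot)))))) hD1) hD2) hEn) hbEn
    have hdisjE : ILProof Ax (Formula.rhd (E.disj E.dia) E) :=
      ILProof.mp (ILProof.J3 E E.dia E)
        (ILProof.mp (ILProof.mp (conj_intro _ _) (rhd_of_imp (imp_id E))) (ILProof.J5 E))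
    have hDE : ILProof Ax (Formula.rhd D E) :=
      rhd_trans_prov (rhd_deficiency D) (rhd_trans_prov (rhd_of_imp hKimp) hdisjE)
    have thm1 : ILProof Ax ((Formula.rhd C D).impl (Formula.rhd C E)) := by
      show Der Ax [Formula.rhd C D] (Formula.rhd C E)
      have hh : Der Ax [Formula.rhd C D] (Formula.rhd C D) := der_hyp (by simp)
      exact der_mp (der_of_prov (ILProof.J2 C D E))
        (der_mp (der_mp (der_of_prov (conj_intro _ _)) hh) (der_of_prov hDE))
    have hCE : Formula.rhd C E ∈ Γ := mcs_mp_thm hΓ thm1 hCD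
    have thm2 : ILProof Ax ((Formula.rhd C E).impl ((Formula.rhd E B).impl
        (Formula.rhd C B))) := by
      show Der Ax [Formula.rhd C E, Formula.rhd E B] (Formula.rhd C B)
      have hh1 : Der Ax [Formula.rhd C E, Formula.rhd E B] (Formula.rhd C E) :=
        der_hyp (by simp)
      have hh2 : Der Ax [Formula.rhd C E, Formula.rhd E B] (Formula.rhd E B) :=
        der_hyp (by simp)
      exact der_mp (der_of_prov (ILProof.J2 C E B))
        (der_mp (der_mp (der_of_prov (conj_intro _ _)) hh1) hh2)
    have hCB : Formula.rhd C B ∈ Γ := mcs_mp2_thm hΓ thm2 hCE hEB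
    exact mcs_not_both hΔ hC (hcrit C hCB).1
  obtain ⟨Δ', hΔ', hsub⟩ := lindenbaum hcons
  refine ⟨Δ', hΔ', ?_, hsub (by simp [hΘdef]), hsub (by simp [hΘdef])⟩
  intro A hAB
  constructor
  · refine hsub ?_
    rw [hΘdef]
    exact Set.mem_insert_of_mem _ (Set.mem_insert_of_mem _ ⟨A, hAB, Or.inl rfl⟩)
  · refine hsub ?_
    rw [hΘdef]
    exact Set.mem_insert_of_mem _ (Set.mem_insert_of_mem _ ⟨A, hAB, Or.inr rfl⟩)
end

section
/- An IL-frame F validates the schema M: A ▷ B → (A ∧ Box C) ▷ (B ∧ Box C) (for all valuations and all formulas A, B, C) if and only if F satisfies the frame condition: for all worlds x, y, u, v, if y S_x u and u R v then y R v. -/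
open Formula

/-- Forcing over a Veltman-style structure given by relations R, S and valuation V. -/
def forces {W : Type} (R : W → W → Prop) (S : W → W → W → Prop)
    (V : W → ℕ → Prop) : W → Formula → Prop
  | _, Formula.bot => False
  | w, Formula.var n => V w n
  | w, Formula.impl φ ψ => forces R S V w φ → forces R S V w ψ
  | w, Formula.box φ => ∀ v, R w v → forces R S V v φ
  | w, Formula.rhd φ ψ =>
      ∀ u, R w u → forces R S V u φ → ∃ v, S w u v ∧ forces R S V v ψ

/-- an IL-frame validates Montagna's schema M iff it satisfies
the frame condition y S_x u ∧ u R v → y R v. -/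
theorem M_frame_characterization {W : Type} [Nonempty W]
    (R : W → W → Prop) (S : W → W → W → Prop)
    (hRtrans : ∀ x y z, R x y → R y z → R x z)
    (hRcwf : WellFounded (fun x y => R y x))
    (hSdom : ∀ x y z, S x y z → R x y ∧ R x z)
    (hSrefl : ∀ x y, R x y → S x y y)
    (hRS : ∀ x y z, R x y → R y z → S x y z)
    (hStrans : ∀ x u v w, S x u v → S x v w → S x u w) :
    (∀ (V : W → ℕ → Prop) (A B C : Formula) (w : W),
        forces R S V w ((Formula.rhd A B).impl
          (Formula.rhd (A.conj (Formula.box C)) (B.conj (Formula.box C)))))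
    ↔ (∀ x y u v, S x y u → R u v → R y v) := by
  classical
  have hconj : ∀ (V : W → ℕ → Prop) (w : W) (φ ψ : Formula),
      forces R S V w (φ.conj ψ) ↔ forces R S V w φ ∧ forces R S V w ψ := by
    intro V w φ ψ
    simp only [Formula.conj, Formula.neg, forces]
    tauto
  constructor
  · intro hval x y u v hS hR
    set V : W → ℕ → Prop :=
      fun z n => (n = 0 ∧ z = y) ∨ (n = 1 ∧ z = u) ∨ (n = 2 ∧ R y z) with hV
    have h := hval V (Formula.var 0) (Formula.var 1) (Formula.var 2) x
    simp only [forces] at h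
    have h1 : ∀ z, R x z → forces R S V z (Formula.var 0) →
        ∃ w, S x z w ∧ forces R S V w (Formula.var 1) := by
      intro z hxz hz
      have hzy : z = y := by
        simp only [forces, hV] at hz
        rcases hz with ⟨_, h⟩ | ⟨h, _⟩ | ⟨h, _⟩
        · exact h
        · omega
        · omega
      subst hzy
      exact ⟨u, hS, Or.inr (Or.inl ⟨rfl, rfl⟩)⟩
    have hRxy := (hSdom x y u hS).1
    obtain ⟨v', hSv', hv'⟩ := h h1 y hRxy
      (fun hcon => hcon (Or.inl ⟨rfl, rfl⟩) (fun z hyz => Or.inr (Or.inr ⟨rfl, hyz⟩)))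
    have hv' : V v' 1 ∧ ∀ z, R v' z → V z 2 := by
      by_contra hc
      exact hv' fun p q => hc ⟨p, q⟩
    have hvu : v' = u := by
      have := hv'.1
      simp only [forces, hV] at this
      rcases this with ⟨h, _⟩ | ⟨_, h⟩ | ⟨h, _⟩
      · omega
      · exact h
      · omega
    subst hvu
    have := hv'.2 v hR
    simp only [forces, hV] at this
    rcases this with ⟨h, _⟩ | ⟨h, _⟩ | ⟨_, h⟩
    · omega
    · omega
    · exact h
  · intro hfc V A B C w
    simp only [forces]
    intro h u hRu hu
    have hu : forces R S V u A ∧ ∀ z, R u z → forces R S V z C := by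
      by_contra hc
      exact hu fun p q => hc ⟨p, q⟩
    obtain ⟨hA, hBoxC⟩ := hu
    obtain ⟨v, hSv, hB⟩ := h u hRu hA
    exact ⟨v, hSv, fun hcon => hcon hB (fun z hvz => hBoxC z (hfc w u v z hSv hvz))⟩
end

section
/- IL(M) proves A ▷ B if and only if IL(M) proves A → (B ∨ Diamond B). -/
open Formula

namespace ILAux

open Formula

variable {Ax : Set Formula}

/-- Derivations from a finite list of hypotheses (no necessitation under hypotheses). -/
inductive Deriv (Ax : Set Formula) : List Formula → Formula → Prop
  | thm {Γ φ} : ILProof Ax φ → Deriv Ax Γ φ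
  | hyp {Γ φ} : φ ∈ Γ → Deriv Ax Γ φ
  | mp {Γ φ ψ} : Deriv Ax Γ (φ.impl ψ) → Deriv Ax Γ φ → Deriv Ax Γ ψ

theorem imp_id (φ : Formula) : ILProof Ax (φ.impl φ) :=
  ((ILProof.k2 φ (φ.impl φ) φ).mp (ILProof.k1 φ (φ.impl φ))).mp (ILProof.k1 φ φ)

theorem deduction_aux {Δ : List Formula} {ψ : Formula} (h : Deriv Ax Δ ψ) :
    ∀ φ Γ, Δ = φ :: Γ → Deriv Ax Γ (φ.impl ψ) := by
  induction h with
  | thm h => intro φ Γ _; exact Deriv.mp (Deriv.thm (ILProof.k1 _ _)) (Deriv.thm h)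
  | hyp h =>
      rintro φ Γ rfl
      rcases List.mem_cons.mp h with h | h
      · subst h; exact Deriv.thm (imp_id _)
      · exact Deriv.mp (Deriv.thm (ILProof.k1 _ _)) (Deriv.hyp h)
  | mp _ _ ih1 ih2 =>
      rintro φ Γ rfl
      exact Deriv.mp (Deriv.mp (Deriv.thm (ILProof.k2 _ _ _)) (ih1 _ _ rfl)) (ih2 _ _ rfl)

theorem deduction {Γ : List Formula} {φ ψ : Formula}
    (h : Deriv Ax (φ :: Γ) ψ) : Deriv Ax Γ (φ.impl ψ) :=
  deduction_aux h φ Γ rfl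

theorem deriv_nil_aux {Γ : List Formula} {φ : Formula} (h : Deriv Ax Γ φ) :
    Γ = [] → ILProof Ax φ := by
  induction h with
  | thm h => intro _; exact h
  | hyp h => rintro rfl; simp at h
  | mp _ _ ih1 ih2 => intro hΓ; exact (ih1 hΓ).mp (ih2 hΓ)

theorem deriv_nil {φ : Formula} (h : Deriv Ax [] φ) : ILProof Ax φ :=
  deriv_nil_aux h rfl

theorem Deriv.weak {Γ Γ' : List Formula} {φ : Formula}
    (h : Deriv Ax Γ φ) (hs : ∀ ψ ∈ Γ, ψ ∈ Γ') : Deriv Ax Γ' φ := by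
  induction h with
  | thm h => exact Deriv.thm h
  | hyp h => exact Deriv.hyp (hs _ h)
  | mp _ _ ih1 ih2 => exact Deriv.mp ih1 ih2

theorem Deriv.w1 {Γ : List Formula} {φ χ : Formula}
    (h : Deriv Ax Γ φ) : Deriv Ax (χ :: Γ) φ :=
  h.weak (fun _ hx => List.mem_cons_of_mem _ hx)

theorem dhyp {Γ : List Formula} (φ : Formula) (h : φ ∈ Γ := by simp) :
    Deriv Ax Γ φ := Deriv.hyp h

theorem icomp {a b c : Formula} (h1 : ILProof Ax (a.impl b)) (h2 : ILProof Ax (b.impl c)) :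
    ILProof Ax (a.impl c) := by
  have d : Deriv Ax [a] c :=
    Deriv.mp (Deriv.thm h2) (Deriv.mp (Deriv.thm h1) (dhyp a))
  exact deriv_nil (deduction d)

theorem efq_s10 (φ : Formula) : ILProof Ax (bot.impl φ) :=
  icomp (ILProof.k1 bot φ.neg) (ILProof.dne φ)

theorem dni_s10 (φ : Formula) : ILProof Ax (φ.impl φ.neg.neg) := by
  have d : Deriv Ax [φ.neg, φ] bot :=
    Deriv.mp (dhyp φ.neg) (dhyp φ)
  exact deriv_nil (deduction (deduction d))

theorem bc {Γ : List Formula} {φ : Formula} (h : Deriv Ax (φ.neg :: Γ) bot) :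
    Deriv Ax Γ φ :=
  Deriv.mp (Deriv.thm (ILProof.dne φ)) (deduction h)

theorem and_intro (a b : Formula) : ILProof Ax (a.impl (b.impl (a.conj b))) := by
  have d : Deriv Ax [a.impl b.neg, b, a] bot :=
    Deriv.mp (Deriv.mp (dhyp (a.impl b.neg)) (dhyp a)) (dhyp b)
  exact deriv_nil (deduction (deduction (deduction d)))

theorem and_left (a b : Formula) : ILProof Ax ((a.conj b).impl a) := by
  have d1 : Deriv Ax [a, a.neg, a.conj b] b.neg := by
    have hbot : Deriv Ax [a, a.neg, a.conj b] bot :=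
      Deriv.mp (dhyp a.neg) (dhyp a)
    exact Deriv.mp (Deriv.thm (efq_s10 b.neg)) hbot
  have d2 : Deriv Ax [a.neg, a.conj b] bot :=
    Deriv.mp (dhyp (a.conj b)) (deduction d1)
  exact deriv_nil (deduction (bc d2))

theorem and_right (a b : Formula) : ILProof Ax ((a.conj b).impl b) := by
  have d1 : Deriv Ax [b, a, b.neg, a.conj b] bot :=
    Deriv.mp (dhyp b.neg) (dhyp b)
  have d2 : Deriv Ax [b.neg, a.conj b] bot :=
    Deriv.mp (dhyp (a.conj b)) (deduction (deduction d1))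
  exact deriv_nil (deduction (bc d2))

theorem pand {a b : Formula} (h1 : ILProof Ax a) (h2 : ILProof Ax b) :
    ILProof Ax (a.conj b) :=
  ((and_intro a b).mp h1).mp h2

theorem dand {Γ : List Formula} {a b : Formula}
    (h1 : Deriv Ax Γ a) (h2 : Deriv Ax Γ b) : Deriv Ax Γ (a.conj b) :=
  Deriv.mp (Deriv.mp (Deriv.thm (and_intro a b)) h1) h2

theorem dleft {Γ : List Formula} {a b : Formula}
    (h : Deriv Ax Γ (a.conj b)) : Deriv Ax Γ a :=
  Deriv.mp (Deriv.thm (and_left a b)) h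

theorem dright {Γ : List Formula} {a b : Formula}
    (h : Deriv Ax Γ (a.conj b)) : Deriv Ax Γ b :=
  Deriv.mp (Deriv.thm (and_right a b)) h

theorem l_or_inl (a b : Formula) : ILProof Ax (a.impl (a.disj b)) := by
  have d : Deriv Ax [a.neg, a] bot :=
    Deriv.mp (dhyp a.neg) (dhyp a)
  exact deriv_nil (deduction (deduction (Deriv.mp (Deriv.thm (efq_s10 b)) d)))

theorem l_or_inr (a b : Formula) : ILProof Ax (b.impl (a.disj b)) :=
  ILProof.k1 b a.neg

theorem or_elim (a b c : Formula) :
    ILProof Ax ((a.impl c).impl ((b.impl c).impl ((a.disj b).impl c))) := by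
  have dna : Deriv Ax [c.neg, a.disj b, b.impl c, a.impl c] a.neg := by
    apply deduction
    exact Deriv.mp (dhyp c.neg) (Deriv.mp (dhyp (a.impl c)) (dhyp a))
  have dbot : Deriv Ax [c.neg, a.disj b, b.impl c, a.impl c] bot :=
    Deriv.mp (dhyp c.neg)
      (Deriv.mp (dhyp (b.impl c)) (Deriv.mp (dhyp (a.disj b)) dna))
  exact deriv_nil (deduction (deduction (deduction (bc dbot))))

theorem Deriv.case {Γ : List Formula} {a b c : Formula}
    (h : Deriv Ax Γ (a.disj b)) (h1 : Deriv Ax (a :: Γ) c) (h2 : Deriv Ax (b :: Γ) c) :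
    Deriv Ax Γ c :=
  Deriv.mp (Deriv.mp (Deriv.mp (Deriv.thm (or_elim a b c)) (deduction h1)) (deduction h2)) h

/- modal helpers -/
theorem box_mono {a b : Formula} (h : ILProof Ax (a.impl b)) :
    ILProof Ax ((box a).impl (box b)) :=
  (ILProof.L1 a b).mp (ILProof.nec h)

theorem box_mono2 {a b c : Formula} (h : ILProof Ax (a.impl (b.impl c))) :
    ILProof Ax ((box a).impl ((box b).impl (box c))) :=
  icomp (box_mono h) (ILProof.L1 b c)

theorem box_mono3 {a b c d : Formula} (h : ILProof Ax (a.impl (b.impl (c.impl d)))) :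
    ILProof Ax ((box a).impl ((box b).impl ((box c).impl (box d)))) := by
  have d0 : Deriv Ax [box c, box b, box a] (box d) := by
    have x1 : Deriv Ax [box c, box b, box a] (box (b.impl (c.impl d))) :=
      Deriv.mp (Deriv.thm (box_mono h)) (dhyp (box a))
    have x2 : Deriv Ax [box c, box b, box a] (box (c.impl d)) :=
      Deriv.mp (Deriv.mp (Deriv.thm (ILProof.L1 _ _)) x1) (dhyp (box b))
    exact Deriv.mp (Deriv.mp (Deriv.thm (ILProof.L1 _ _)) x2) (dhyp (box c))
  exact deriv_nil (deduction (deduction (deduction d0)))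

theorem box_neg_dia (φ : Formula) :
    ILProof Ax ((box φ.neg).impl (box (dia φ).neg)) :=
  icomp (ILProof.L2 φ.neg) (box_mono (dni_s10 (box φ.neg)))

/-- ◇a ∧ □c → ◇(a ∧ c) -/
theorem dia_conj (a c : Formula) :
    ILProof Ax (((dia a).conj (box c)).impl (dia (a.conj c))) := by
  have taut : ILProof Ax (c.impl ((a.conj c).neg.impl a.neg)) := by
    have d : Deriv Ax [a, (a.conj c).neg, c] bot :=
      Deriv.mp (dhyp (a.conj c).neg) (dand (dhyp a) (dhyp c))
    exact deriv_nil (deduction (deduction (deduction d)))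
  have d : Deriv Ax [box (a.conj c).neg, (dia a).conj (box c)] bot := by
    have hbc : Deriv Ax [box (a.conj c).neg, (dia a).conj (box c)] (box c) :=
      dright (dhyp ((dia a).conj (box c)))
    have hbna : Deriv Ax [box (a.conj c).neg, (dia a).conj (box c)] (box a.neg) :=
      Deriv.mp (Deriv.mp (Deriv.thm (box_mono2 taut)) hbc) (dhyp (box (a.conj c).neg))
    exact Deriv.mp (dleft (dhyp ((dia a).conj (box c)))) hbna
  exact deriv_nil (deduction (deduction d))

end ILAux

namespace ILAux

open Formula

variable {Ax : Set Formula}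

/-- `Ef a b` expresses `a ▷ b` at a freshly added root: `a → b ∨ ◇b`. -/
def Ef (a b : Formula) : Formula := a.impl (b.disj b.dia)

/-- Truth at a fresh root below all worlds, expressed at the old root. -/
def tr : Formula → Formula
  | Formula.bot => Formula.bot
  | Formula.var n => Formula.var n
  | Formula.impl a b => (tr a).impl (tr b)
  | Formula.box a => a.conj (Formula.box a)
  | Formula.rhd a b => (Ef a b).conj (Formula.box (Ef a b))

theorem tr_impl (a b : Formula) : tr (a.impl b) = (tr a).impl (tr b) := rfl
theorem tr_box (a : Formula) : tr (box a) = a.conj (box a) := rfl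
theorem tr_rhd (a b : Formula) : tr (rhd a b) = (Ef a b).conj (box (Ef a b)) := rfl
theorem tr_neg (a : Formula) : tr a.neg = (tr a).neg := rfl
theorem tr_conj (a b : Formula) : tr (a.conj b) = (tr a).conj (tr b) := rfl
theorem tr_dia (a : Formula) : tr a.dia = ((a.neg).conj (box a.neg)).neg := rfl

/-- Key tautology-style fact: Ef a b → ¬b → ¬◇b → ¬a. -/
theorem Tneg (a b : Formula) :
    ILProof Ax ((Ef a b).impl (b.neg.impl ((dia b).neg.impl a.neg))) := by
  have d0 : Deriv Ax [a, (dia b).neg, b.neg, Ef a b] (b.disj b.dia) :=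
    Deriv.mp (dhyp (Ef a b)) (dhyp a)
  have d : Deriv Ax [a, (dia b).neg, b.neg, Ef a b] bot :=
    Deriv.case d0 (Deriv.mp (dhyp b.neg) (dhyp b))
      (Deriv.mp (dhyp (dia b).neg) (dhyp b.dia))
  exact deriv_nil (deduction (deduction (deduction (deduction d))))

/-- Root-translation of the M axiom's core. -/
theorem TM (A B C : Formula) :
    ILProof Ax ((Ef A B).impl (Ef (A.conj (box C)) (B.conj (box C)))) := by
  have d0 : Deriv Ax [A.conj (box C), Ef A B] (B.disj B.dia) :=
    Deriv.mp (dhyp (Ef A B)) (dleft (dhyp (A.conj (box C))))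
  have dY : Deriv Ax [A.conj (box C), Ef A B]
      ((B.conj (box C)).disj (B.conj (box C)).dia) := by
    apply Deriv.case d0
    · exact Deriv.mp (Deriv.thm (l_or_inl (B.conj (box C)) (B.conj (box C)).dia))
        (dand (dhyp B) (dright (dhyp (A.conj (box C)))))
    · have hbbc : Deriv Ax (B.dia :: [A.conj (box C), Ef A B]) (box (box C)) :=
        Deriv.mp (Deriv.thm (ILProof.L2 C)) (dright (dhyp (A.conj (box C))))
      have hd : Deriv Ax (B.dia :: [A.conj (box C), Ef A B]) (dia (B.conj (box C))) :=
        Deriv.mp (Deriv.thm (dia_conj B (box C))) (dand (dhyp B.dia) hbbc)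
      exact Deriv.mp (Deriv.thm (l_or_inr (B.conj (box C)) (B.conj (box C)).dia)) hd
  exact deriv_nil (deduction (deduction dY))

theorem trM (A B C : Formula) :
    ILProof Ax (tr ((rhd A B).impl (rhd (A.conj (box C)) (B.conj (box C))))) := by
  rw [tr_impl, tr_rhd, tr_rhd]
  have T := TM (Ax := Ax) A B C
  have d : Deriv Ax [(Ef A B).conj (box (Ef A B))]
      ((Ef (A.conj (box C)) (B.conj (box C))).conj
        (box (Ef (A.conj (box C)) (B.conj (box C))))) :=
    dand (Deriv.mp (Deriv.thm T) (dleft (dhyp ((Ef A B).conj (box (Ef A B))))))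
         (Deriv.mp (Deriv.thm (box_mono T)) (dright (dhyp ((Ef A B).conj (box (Ef A B))))))
  exact deriv_nil (deduction d)

theorem trL1 (a b : Formula) :
    ILProof Ax (tr ((box (a.impl b)).impl ((box a).impl (box b)))) := by
  rw [tr_impl, tr_impl, tr_box, tr_box, tr_box]
  have d : Deriv Ax [a.conj (box a), (a.impl b).conj (box (a.impl b))] (b.conj (box b)) := by
    have hb : Deriv Ax [a.conj (box a), (a.impl b).conj (box (a.impl b))] b :=
      Deriv.mp (dleft (dhyp ((a.impl b).conj (box (a.impl b)))))
        (dleft (dhyp (a.conj (box a))))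
    have hbb : Deriv Ax [a.conj (box a), (a.impl b).conj (box (a.impl b))] (box b) :=
      Deriv.mp (Deriv.mp (Deriv.thm (ILProof.L1 a b))
        (dright (dhyp ((a.impl b).conj (box (a.impl b))))))
        (dright (dhyp (a.conj (box a))))
    exact dand hb hbb
  exact deriv_nil (deduction (deduction d))

theorem trL2 (a : Formula) : ILProof Ax (tr ((box a).impl (box (box a)))) := by
  rw [tr_impl, tr_box, tr_box]
  have d : Deriv Ax [a.conj (box a)] ((box a).conj (box (box a))) :=
    dand (dright (dhyp (a.conj (box a))))
      (Deriv.mp (Deriv.thm (ILProof.L2 a)) (dright (dhyp (a.conj (box a)))))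
  exact deriv_nil (deduction d)

theorem trL3 (a : Formula) : ILProof Ax (tr ((box ((box a).impl a)).impl (box a))) := by
  rw [tr_impl, tr_box, tr_box]
  have d : Deriv Ax [((box a).impl a).conj (box ((box a).impl a))] (a.conj (box a)) := by
    have hba : Deriv Ax [((box a).impl a).conj (box ((box a).impl a))] (box a) :=
      Deriv.mp (Deriv.thm (ILProof.L3 a))
        (dright (dhyp (((box a).impl a).conj (box ((box a).impl a)))))
    have ha : Deriv Ax [((box a).impl a).conj (box ((box a).impl a))] a :=
      Deriv.mp (dleft (dhyp (((box a).impl a).conj (box ((box a).impl a))))) hba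
    exact dand ha hba
  exact deriv_nil (deduction d)

theorem TJ1 (a b : Formula) : ILProof Ax ((a.impl b).impl (Ef a b)) := by
  have d : Deriv Ax [box b.neg, b.neg, a, a.impl b] bot :=
    Deriv.mp (dhyp b.neg) (Deriv.mp (dhyp (a.impl b)) (dhyp a))
  exact deriv_nil (deduction (deduction (deduction (deduction d))))

theorem trJ1 (a b : Formula) : ILProof Ax (tr ((box (a.impl b)).impl (rhd a b))) := by
  rw [tr_impl, tr_box, tr_rhd]
  have d : Deriv Ax [(a.impl b).conj (box (a.impl b))] ((Ef a b).conj (box (Ef a b))) :=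
    dand (Deriv.mp (Deriv.thm (TJ1 a b)) (dleft (dhyp ((a.impl b).conj (box (a.impl b))))))
      (Deriv.mp (Deriv.thm (box_mono (TJ1 a b)))
        (dright (dhyp ((a.impl b).conj (box (a.impl b))))))
  exact deriv_nil (deduction d)

theorem TJ2 (a b c : Formula) :
    ILProof Ax ((Ef a b).impl ((Ef b c).impl ((box (Ef b c)).impl (Ef a c)))) := by
  have ndc : Deriv Ax [box c.neg, c.neg, a, box (Ef b c), Ef b c, Ef a b] (dia c).neg :=
    Deriv.mp (Deriv.thm (dni_s10 (box c.neg))) (dhyp (box c.neg))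
  have nb : Deriv Ax [box c.neg, c.neg, a, box (Ef b c), Ef b c, Ef a b] b.neg :=
    Deriv.mp (Deriv.mp (Deriv.mp (Deriv.thm (Tneg b c)) (dhyp (Ef b c))) (dhyp c.neg)) ndc
  have bndc : Deriv Ax [box c.neg, c.neg, a, box (Ef b c), Ef b c, Ef a b]
      (box (dia c).neg) :=
    Deriv.mp (Deriv.thm (box_neg_dia c)) (dhyp (box c.neg))
  have bnb : Deriv Ax [box c.neg, c.neg, a, box (Ef b c), Ef b c, Ef a b] (box b.neg) :=
    Deriv.mp (Deriv.mp (Deriv.mp (Deriv.thm (box_mono3 (Tneg b c)))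
      (dhyp (box (Ef b c)))) (dhyp (box c.neg))) bndc
  have d0 : Deriv Ax [box c.neg, c.neg, a, box (Ef b c), Ef b c, Ef a b] (b.disj b.dia) :=
    Deriv.mp (dhyp (Ef a b)) (dhyp a)
  have d : Deriv Ax [box c.neg, c.neg, a, box (Ef b c), Ef b c, Ef a b] bot :=
    Deriv.case d0 (Deriv.mp nb.w1 (dhyp b)) (Deriv.mp (dhyp b.dia) bnb.w1)
  exact deriv_nil (deduction (deduction (deduction (deduction (deduction (deduction d))))))

theorem trJ2 (a b c : Formula) :
    ILProof Ax (tr (((rhd a b).conj (rhd b c)).impl (rhd a c))) := by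
  rw [tr_impl, tr_conj, tr_rhd, tr_rhd, tr_rhd]
  have hT := TJ2 (Ax := Ax) a b c
  have hBT := box_mono3 (Ax := Ax) (TJ2 a b c)
  have d : Deriv Ax [((Ef a b).conj (box (Ef a b))).conj ((Ef b c).conj (box (Ef b c)))]
      ((Ef a c).conj (box (Ef a c))) := by
    have H := dhyp (Ax := Ax)
      (Γ := [((Ef a b).conj (box (Ef a b))).conj ((Ef b c).conj (box (Ef b c)))])
      (((Ef a b).conj (box (Ef a b))).conj ((Ef b c).conj (box (Ef b c))))
    have e1 := dleft (dleft H)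
    have be1 := dright (dleft H)
    have e2 := dleft (dright H)
    have be2 := dright (dright H)
    have loc := Deriv.mp (Deriv.mp (Deriv.mp (Deriv.thm hT) e1) e2) be2
    have bbe2 := Deriv.mp (Deriv.thm (ILProof.L2 (Ef b c))) be2
    have bloc := Deriv.mp (Deriv.mp (Deriv.mp (Deriv.thm hBT) be1) be2) bbe2
    exact dand loc bloc
  exact deriv_nil (deduction d)

theorem TJ3 (a b c : Formula) :
    ILProof Ax ((Ef a c).impl ((Ef b c).impl (Ef (a.disj b) c))) := by
  have dcd : Deriv Ax [box c.neg, c.neg, a.disj b, Ef b c, Ef a c] (c.disj c.dia) :=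
    Deriv.case (dhyp (a.disj b))
      (Deriv.mp (dhyp (Ef a c)) (dhyp a))
      (Deriv.mp (dhyp (Ef b c)) (dhyp b))
  have d : Deriv Ax [box c.neg, c.neg, a.disj b, Ef b c, Ef a c] bot :=
    Deriv.case dcd (Deriv.mp (dhyp c.neg) (dhyp c))
      (Deriv.mp (dhyp c.dia) (dhyp (box c.neg)))
  exact deriv_nil (deduction (deduction (deduction (deduction (deduction d)))))

theorem trJ3 (a b c : Formula) :
    ILProof Ax (tr (((rhd a c).conj (rhd b c)).impl (rhd (a.disj b) c))) := by
  rw [tr_impl, tr_conj, tr_rhd, tr_rhd, tr_rhd]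
  have hT := TJ3 (Ax := Ax) a b c
  have hBT := box_mono2 (Ax := Ax) (TJ3 a b c)
  have d : Deriv Ax [((Ef a c).conj (box (Ef a c))).conj ((Ef b c).conj (box (Ef b c)))]
      ((Ef (a.disj b) c).conj (box (Ef (a.disj b) c))) := by
    have H := dhyp (Ax := Ax)
      (Γ := [((Ef a c).conj (box (Ef a c))).conj ((Ef b c).conj (box (Ef b c)))])
      (((Ef a c).conj (box (Ef a c))).conj ((Ef b c).conj (box (Ef b c))))
    have e1 := dleft (dleft H)
    have be1 := dright (dleft H)
    have e2 := dleft (dright H)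
    have be2 := dright (dright H)
    exact dand (Deriv.mp (Deriv.mp (Deriv.thm hT) e1) e2)
      (Deriv.mp (Deriv.mp (Deriv.thm hBT) be1) be2)
  exact deriv_nil (deduction d)

theorem trJ4 (a b : Formula) :
    ILProof Ax (tr ((rhd a b).impl ((dia a).impl (dia b)))) := by
  rw [tr_impl, tr_impl, tr_rhd, tr_dia, tr_dia]
  have d : Deriv Ax [b.neg.conj (box b.neg), (a.neg.conj (box a.neg)).neg,
      (Ef a b).conj (box (Ef a b))] bot := by
    have e := dleft (dhyp (Ax := Ax)
      (Γ := [b.neg.conj (box b.neg), (a.neg.conj (box a.neg)).neg,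
        (Ef a b).conj (box (Ef a b))]) ((Ef a b).conj (box (Ef a b))))
    have be := dright (dhyp (Ax := Ax)
      (Γ := [b.neg.conj (box b.neg), (a.neg.conj (box a.neg)).neg,
        (Ef a b).conj (box (Ef a b))]) ((Ef a b).conj (box (Ef a b))))
    have nb := dleft (dhyp (Ax := Ax)
      (Γ := [b.neg.conj (box b.neg), (a.neg.conj (box a.neg)).neg,
        (Ef a b).conj (box (Ef a b))]) (b.neg.conj (box b.neg)))
    have bnb := dright (dhyp (Ax := Ax)
      (Γ := [b.neg.conj (box b.neg), (a.neg.conj (box a.neg)).neg,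
        (Ef a b).conj (box (Ef a b))]) (b.neg.conj (box b.neg)))
    have ndb := Deriv.mp (Deriv.thm (dni_s10 (box b.neg))) bnb
    have na := Deriv.mp (Deriv.mp (Deriv.mp (Deriv.thm (Tneg a b)) e) nb) ndb
    have bndb := Deriv.mp (Deriv.thm (box_neg_dia b)) bnb
    have bna := Deriv.mp (Deriv.mp (Deriv.mp (Deriv.thm (box_mono3 (Tneg a b))) be) bnb) bndb
    exact Deriv.mp (dhyp ((a.neg.conj (box a.neg)).neg)) (dand na bna)
  exact deriv_nil (deduction (deduction (deduction d)))

theorem TJ5 (a : Formula) : ILProof Ax (Ef (dia a) a) := by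
  have d : Deriv Ax [box a.neg, a.neg, dia a] bot :=
    Deriv.mp (dhyp (dia a)) (dhyp (box a.neg))
  exact deriv_nil (deduction (deduction (deduction d)))

theorem trJ5 (a : Formula) : ILProof Ax (tr (rhd (dia a) a)) := by
  rw [tr_rhd]
  exact pand (TJ5 a) (ILProof.nec (TJ5 a))

/-- Soundness of the root translation. -/
theorem tr_sound {φ : Formula} (h : ILProof Mschema φ) : ILProof Mschema (tr φ) := by
  induction h with
  | ax h =>
      obtain ⟨A, B, C, rfl⟩ := h
      exact trM A B C
  | k1 a b => exact ILProof.k1 (tr a) (tr b)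
  | k2 a b c => exact ILProof.k2 (tr a) (tr b) (tr c)
  | dne a => exact ILProof.dne (tr a)
  | L1 a b => exact trL1 a b
  | L2 a => exact trL2 a
  | L3 a => exact trL3 a
  | J1 a b => exact trJ1 a b
  | J2 a b c => exact trJ2 a b c
  | J3 a b c => exact trJ3 a b c
  | J4 a b => exact trJ4 a b
  | J5 a => exact trJ5 a
  | mp h1 h2 ih1 ih2 => exact ih1.mp ih2
  | nec h ih => exact pand h (ILProof.nec h)

end ILAux

/-- IL(M) ⊢ A ▷ B iff IL(M) ⊢ A → B ∨ Diamond B. -/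
theorem ilm_rhd_characterization (A B : Formula) :
    ILMProvable (Formula.rhd A B) ↔ ILMProvable (A.impl (B.disj B.dia)) := by
  constructor
  · intro h
    have h2 := ILAux.tr_sound h
    rw [ILAux.tr_rhd] at h2
    exact (ILAux.and_left _ _).mp h2
  · intro h
    have h1 : ILProof Mschema (rhd A (B.disj B.dia)) :=
      (ILProof.J1 _ _).mp (ILProof.nec h)
    have h2 : ILProof Mschema (rhd B B) :=
      (ILProof.J1 B B).mp (ILProof.nec (ILAux.imp_id B))
    have h3 : ILProof Mschema (rhd B.dia B) := ILProof.J5 B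
    have h4 : ILProof Mschema (rhd (B.disj B.dia) B) :=
      (ILProof.J3 B B.dia B).mp (ILAux.pand h2 h3)
    exact (ILProof.J2 A (B.disj B.dia) B).mp (ILAux.pand h1 h4)
end

section
/- IL(M) proves A ▷ B if and only if IL(M) proves Diamond A → Diamond B. -/
open Formula

namespace ILMAux
open Formula

abbrev Pv (φ : Formula) : Prop := ILMProvable φ

lemma pv_mp {φ ψ : Formula} (h1 : Pv (φ.impl ψ)) (h2 : Pv φ) : Pv ψ := ILProof.mp h1 h2

lemma pv_id (φ : Formula) : Pv (φ.impl φ) := by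
  have h1 := ILProof.k2 (Ax := Mschema) φ (φ.impl φ) φ
  have h2 := ILProof.k1 (Ax := Mschema) φ (φ.impl φ)
  have h3 := ILProof.k1 (Ax := Mschema) φ φ
  exact (h1.mp h2).mp h3

/-- Derivability from a set of hypotheses, with all ILM theorems available. -/
inductive Dv (Γ : Set Formula) : Formula → Prop
  | hyp {φ} : φ ∈ Γ → Dv Γ φ
  | thm {φ} : Pv φ → Dv Γ φ
  | mp {φ ψ} : Dv Γ (φ.impl ψ) → Dv Γ φ → Dv Γ ψ

lemma Dv.weak {Γ Γ' : Set Formula} {φ} (hs : Γ ⊆ Γ') (h : Dv Γ φ) : Dv Γ' φ := by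
  induction h with
  | hyp hin => exact Dv.hyp (hs hin)
  | thm t => exact Dv.thm t
  | mp _ _ ih1 ih2 => exact Dv.mp ih1 ih2

lemma Dv.ded {Γ : Set Formula} {φ ψ} (h : Dv (insert φ Γ) ψ) : Dv Γ (φ.impl ψ) := by
  induction h with
  | @hyp χ hin =>
    rcases Set.mem_insert_iff.1 hin with h' | h'
    · subst h'; exact Dv.thm (pv_id _)
    · exact Dv.mp (Dv.thm (ILProof.k1 _ _)) (Dv.hyp h')
  | @thm χ t => exact Dv.mp (Dv.thm (ILProof.k1 _ _)) (Dv.thm t)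
  | mp _ _ ih1 ih2 => exact Dv.mp (Dv.mp (Dv.thm (ILProof.k2 _ _ _)) ih1) ih2

lemma pv_of_dv {φ} (h : Dv ∅ φ) : Pv φ := by
  induction h with
  | hyp hin => exact absurd hin (Set.notMem_empty _)
  | thm t => exact t
  | mp _ _ ih1 ih2 => exact pv_mp ih1 ih2

lemma Dv.dne {Γ : Set Formula} {φ} (h : Dv Γ (φ.neg.neg)) : Dv Γ φ :=
  Dv.mp (Dv.thm (ILProof.dne _)) h

/-- helper to use hypothesis quickly -/
lemma Dv.h0 {Γ : Set Formula} {φ} : Dv (insert φ Γ) φ := Dv.hyp (Set.mem_insert _ _)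
lemma Dv.h1 {Γ : Set Formula} {φ ψ} : Dv (insert ψ (insert φ Γ)) φ :=
  Dv.hyp (Set.mem_insert_of_mem _ (Set.mem_insert _ _))
lemma Dv.h2 {Γ : Set Formula} {φ ψ χ} : Dv (insert χ (insert ψ (insert φ Γ))) φ :=
  Dv.hyp (Set.mem_insert_of_mem _ (Set.mem_insert_of_mem _ (Set.mem_insert _ _)))
lemma Dv.h3 {Γ : Set Formula} {φ ψ χ ρ} : Dv (insert ρ (insert χ (insert ψ (insert φ Γ)))) φ :=
  Dv.hyp (Set.mem_insert_of_mem _ (Set.mem_insert_of_mem _ (Set.mem_insert_of_mem _ (Set.mem_insert _ _))))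
lemma Dv.h4 {Γ : Set Formula} {φ ψ χ ρ τ} : Dv (insert τ (insert ρ (insert χ (insert ψ (insert φ Γ))))) φ :=
  Dv.hyp (Set.mem_insert_of_mem _ (Set.mem_insert_of_mem _ (Set.mem_insert_of_mem _ (Set.mem_insert_of_mem _ (Set.mem_insert _ _)))))

-- efq : ⊥ → φ
lemma t_efq (φ : Formula) : Pv (Formula.bot.impl φ) := by
  apply pv_of_dv
  apply Dv.ded
  exact Dv.dne (Dv.mp (Dv.thm (ILProof.k1 _ _)) Dv.h0)

lemma t_trans {φ ψ χ : Formula} (h1 : Pv (φ.impl ψ)) (h2 : Pv (ψ.impl χ)) : Pv (φ.impl χ) := by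
  apply pv_of_dv; apply Dv.ded
  exact Dv.mp (Dv.thm h2) (Dv.mp (Dv.thm h1) Dv.h0)

-- conj φ ψ = neg (φ.impl ψ.neg)
lemma t_and_intro (φ ψ : Formula) : Pv (φ.impl (ψ.impl (φ.conj ψ))) := by
  apply pv_of_dv; apply Dv.ded; apply Dv.ded; apply Dv.ded
  -- hyps: φ, ψ, (φ.impl ψ.neg) ⊢ ⊥
  exact Dv.mp (Dv.mp Dv.h0 Dv.h2) Dv.h1

lemma t_and_left (φ ψ : Formula) : Pv ((φ.conj ψ).impl φ) := by
  apply pv_of_dv; apply Dv.ded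
  apply Dv.dne; apply Dv.ded
  -- hyps: ¬(φ→¬ψ), ¬φ ⊢ ⊥
  refine Dv.mp Dv.h1 ?_
  apply Dv.ded
  -- hyps: ¬(φ→¬ψ), ¬φ, φ ⊢ ¬ψ
  exact Dv.mp (Dv.thm (t_efq _)) (Dv.mp Dv.h1 Dv.h0)

lemma t_and_right (φ ψ : Formula) : Pv ((φ.conj ψ).impl ψ) := by
  apply pv_of_dv; apply Dv.ded
  apply Dv.dne; apply Dv.ded
  -- hyps: ¬(φ→¬ψ), ¬ψ ⊢ ⊥
  refine Dv.mp Dv.h1 ?_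
  exact Dv.mp (Dv.thm (ILProof.k1 _ _)) Dv.h0

-- disj φ ψ = φ.neg.impl ψ
lemma t_or_inl (φ ψ : Formula) : Pv (φ.impl (φ.disj ψ)) := by
  apply pv_of_dv; apply Dv.ded; apply Dv.ded
  exact Dv.mp (Dv.thm (t_efq _)) (Dv.mp Dv.h0 Dv.h1)

lemma t_or_inr (φ ψ : Formula) : Pv (ψ.impl (φ.disj ψ)) := ILProof.k1 _ _

lemma t_or_elim (φ ψ χ : Formula) :
    Pv ((φ.impl χ).impl ((ψ.impl χ).impl ((φ.disj ψ).impl χ))) := by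
  apply pv_of_dv; apply Dv.ded; apply Dv.ded; apply Dv.ded
  -- hyps: φ→χ, ψ→χ, ¬φ→ψ ⊢ χ
  apply Dv.dne; apply Dv.ded
  -- + ¬χ ⊢ ⊥
  have hnphi : Dv (insert χ.neg (insert (φ.neg.impl ψ) (insert (ψ.impl χ) (insert (φ.impl χ) ∅)))) φ.neg := by
    apply Dv.ded
    exact Dv.mp Dv.h1 (Dv.mp Dv.h4 Dv.h0)
  exact Dv.mp Dv.h0 (Dv.mp Dv.h2 (Dv.mp Dv.h1 hnphi))

lemma t_dni (φ : Formula) : Pv (φ.impl φ.neg.neg) := by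
  apply pv_of_dv; apply Dv.ded; apply Dv.ded
  exact Dv.mp Dv.h0 Dv.h1

lemma t_contra {φ ψ : Formula} (h : Pv (φ.impl ψ)) : Pv (ψ.neg.impl φ.neg) := by
  apply pv_of_dv; apply Dv.ded; apply Dv.ded
  exact Dv.mp Dv.h1 (Dv.mp (Dv.thm h) Dv.h0)

lemma t_swap (φ ψ χ : Formula) : Pv ((φ.impl (ψ.impl χ)).impl (ψ.impl (φ.impl χ))) := by
  apply pv_of_dv; apply Dv.ded; apply Dv.ded; apply Dv.ded
  exact Dv.mp (Dv.mp Dv.h2 Dv.h0) Dv.h1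

lemma t_imp_under {a x y : Formula} (h : Pv (x.impl y)) : Pv ((a.impl x).impl (a.impl y)) := by
  apply pv_of_dv; apply Dv.ded; apply Dv.ded
  exact Dv.mp (Dv.thm h) (Dv.mp Dv.h1 Dv.h0)

lemma fold_intro {χ : Formula} (L : List Formula) (h : Pv χ) : Pv (L.foldr Formula.impl χ) := by
  induction L with
  | nil => exact h
  | cons a L ih => exact pv_mp (ILProof.k1 _ _) ih

lemma fold_imp_int (L : List Formula) (φ ψ : Formula) :
    Pv ((L.foldr Formula.impl (φ.impl ψ)).impl ((L.foldr Formula.impl φ).impl (L.foldr Formula.impl ψ))) := by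
  induction L with
  | nil => exact pv_id _
  | cons a L ih =>
    apply pv_of_dv; apply Dv.ded; apply Dv.ded; apply Dv.ded
    exact Dv.mp (Dv.mp (Dv.thm ih) (Dv.mp Dv.h2 Dv.h0)) (Dv.mp Dv.h1 Dv.h0)

lemma fold_mp {L : List Formula} {φ ψ : Formula}
    (h1 : Pv (L.foldr Formula.impl (φ.impl ψ))) (h2 : Pv (L.foldr Formula.impl φ)) :
    Pv (L.foldr Formula.impl ψ) :=
  pv_mp (pv_mp (fold_imp_int L φ ψ) h1) h2

lemma fold_mono {L : List Formula} {x y : Formula} (h : Pv (x.impl y)) :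
    Pv ((L.foldr Formula.impl x).impl (L.foldr Formula.impl y)) := by
  induction L with
  | nil => exact h
  | cons a L ih => exact t_imp_under ih

lemma fold_weak_int (L : List Formula) (x : Formula) : Pv (x.impl (L.foldr Formula.impl x)) := by
  induction L with
  | nil => exact pv_id _
  | cons a L ih => exact t_trans ih (ILProof.k1 _ _)

lemma fold_exchange_int (L : List Formula) (ψ χ : Formula) :
    Pv ((ψ.impl (L.foldr Formula.impl χ)).impl (L.foldr Formula.impl (ψ.impl χ))) := by
  induction L with
  | nil => exact pv_id _
  | cons a L ih =>
    apply pv_of_dv; apply Dv.ded; apply Dv.ded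
    refine Dv.mp (Dv.thm ih) ?_
    apply Dv.ded
    exact Dv.mp (Dv.mp Dv.h2 Dv.h0) Dv.h1

lemma dv_fold {S : Set Formula} {χ : Formula} (h : Dv S χ) :
    ∃ L : List Formula, (∀ ψ ∈ L, ψ ∈ S) ∧ Pv (L.foldr Formula.impl χ) := by
  induction h with
  | @hyp φ hin => exact ⟨[φ], by simpa using hin, pv_id _⟩
  | @thm φ t => exact ⟨[], by simp, t⟩
  | @mp φ ψ _ _ ih1 ih2 =>
    obtain ⟨L₁, hm1, hp1⟩ := ih1
    obtain ⟨L₂, hm2, hp2⟩ := ih2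
    refine ⟨L₁ ++ L₂, ?_, ?_⟩
    · intro x hx; rcases List.mem_append.1 hx with h' | h'
      exacts [hm1 _ h', hm2 _ h']
    · rw [List.foldr_append]
      have hp1' : Pv (L₁.foldr Formula.impl (L₂.foldr Formula.impl (φ.impl ψ))) :=
        pv_mp (fold_mono (L := L₁) (fold_weak_int L₂ _)) hp1
      exact fold_mp (pv_mp (fold_mono (L := L₁) (fold_imp_int L₂ φ ψ)) hp1') (fold_intro L₁ hp2)

lemma fold_peel {S : Set Formula} {χ : Formula} :
    ∀ L : List Formula, (∀ ψ ∈ L, ψ ∈ S) → Dv S (L.foldr Formula.impl χ) → Dv S χ := by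
  intro L
  induction L with
  | nil => intro _ h; exact h
  | cons a L ih =>
    intro hm h
    exact ih (fun ψ hψ => hm ψ (List.mem_cons_of_mem _ hψ))
      (Dv.mp h (Dv.hyp (hm a (List.mem_cons_self))))

lemma not_consistent_iff_dv {S : Set Formula} :
    ¬ Consistent Mschema S ↔ Dv S Formula.bot := by
  constructor
  · intro h
    rw [Consistent, not_not] at h
    obtain ⟨L, hm, hp⟩ := h
    exact fold_peel L hm (Dv.thm hp)
  · intro h hc
    obtain ⟨L, hm, hp⟩ := dv_fold h
    exact hc ⟨L, hm, hp⟩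

lemma consistent_iff_not_dv {S : Set Formula} :
    Consistent Mschema S ↔ ¬ Dv S Formula.bot := by
  constructor
  · intro h hd; exact (not_consistent_iff_dv.2 hd) h
  · intro h; by_contra hc; exact h (not_consistent_iff_dv.1 hc)

lemma chain_list {c : Set (Set Formula)} (hch : IsChain (· ⊆ ·) c) (hne : c.Nonempty) :
    ∀ L : List Formula, (∀ ψ ∈ L, ψ ∈ ⋃₀ c) → ∃ T ∈ c, ∀ ψ ∈ L, ψ ∈ T := by
  intro L
  induction L with
  | nil => intro _; exact ⟨hne.choose, hne.choose_spec, by simp⟩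
  | cons a L ih =>
    intro hm
    obtain ⟨T, hT, hTm⟩ := ih (fun ψ hψ => hm ψ (List.mem_cons_of_mem _ hψ))
    obtain ⟨T', hT', haT'⟩ := hm a (List.mem_cons_self)
    rcases eq_or_ne T T' with rfl | hne'
    · exact ⟨T, hT, by intro ψ hψ; rcases List.mem_cons.1 hψ with rfl | h'; exacts [haT', hTm _ h']⟩
    rcases hch hT hT' hne' with hsub | hsub
    · exact ⟨T', hT', by intro ψ hψ; rcases List.mem_cons.1 hψ with rfl | h'; exacts [haT', hsub (hTm _ h')]⟩
    · exact ⟨T, hT, by intro ψ hψ; rcases List.mem_cons.1 hψ with rfl | h'; exacts [hsub haT', hTm _ h']⟩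

lemma lindenbaum {S : Set Formula} (h : Consistent Mschema S) :
    ∃ Γ, S ⊆ Γ ∧ MCS Mschema Γ := by
  set F : Set (Set Formula) := {T | S ⊆ T ∧ Consistent Mschema T} with hF
  have hzorn := zorn_subset_nonempty F ?_ S ⟨subset_rfl, h⟩
  · obtain ⟨Γ, hSΓ, hmax⟩ := hzorn
    have hΓF : Γ ∈ F := hmax.1
    refine ⟨Γ, hSΓ, hΓF.2, ?_⟩
    intro φ
    by_contra hcon
    push_neg at hcon
    obtain ⟨h1, h2⟩ := hcon
    have key : ∀ ψ, ψ ∉ Γ → ¬ Consistent Mschema (insert ψ Γ) := by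
      intro ψ hψ hconψ
      have hmem : insert ψ Γ ∈ F := ⟨hSΓ.trans (Set.subset_insert _ _), hconψ⟩
      have hsub : insert ψ Γ ⊆ Γ := hmax.2 hmem (Set.subset_insert _ _)
      exact hψ (hsub (Set.mem_insert _ _))
    have d1 : Dv Γ φ.neg := Dv.ded (not_consistent_iff_dv.1 (key _ h1))
    have d2 : Dv Γ φ.neg.neg := Dv.ded (not_consistent_iff_dv.1 (key _ h2))
    exact (consistent_iff_not_dv.1 hΓF.2) (Dv.mp d2 d1)
  · intro c hc hchain hne
    refine ⟨⋃₀ c, ⟨?_, ?_⟩, fun s hs => Set.subset_sUnion_of_mem hs⟩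
    · obtain ⟨T, hT⟩ := hne
      exact ((hc hT).1).trans (Set.subset_sUnion_of_mem hT)
    · rw [consistent_iff_not_dv]
      intro hd
      obtain ⟨L, hm, hp⟩ := dv_fold hd
      obtain ⟨T, hT, hTm⟩ := chain_list hchain hne L hm
      exact (hc hT).2 ⟨L, hTm, hp⟩

/-! ### MCS lemmas -/

lemma mcs_dv {Γ : Set Formula} (hΓ : MCS Mschema Γ) {φ : Formula} (h : Dv Γ φ) : φ ∈ Γ := by
  by_contra hmem
  rcases hΓ.2 φ with h' | h'
  · exact hmem h'
  · exact (consistent_iff_not_dv.1 hΓ.1) (Dv.mp (Dv.hyp h') h)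

lemma mem_of_pv {Γ : Set Formula} (hΓ : MCS Mschema Γ) {φ : Formula} (h : Pv φ) : φ ∈ Γ :=
  mcs_dv hΓ (Dv.thm h)

lemma mcs_mp {Γ : Set Formula} (hΓ : MCS Mschema Γ) {φ ψ : Formula}
    (h1 : φ.impl ψ ∈ Γ) (h2 : φ ∈ Γ) : ψ ∈ Γ :=
  mcs_dv hΓ (Dv.mp (Dv.hyp h1) (Dv.hyp h2))

lemma mcs_no_contra {Γ : Set Formula} (hΓ : MCS Mschema Γ) {φ : Formula}
    (h1 : φ ∈ Γ) (h2 : φ.neg ∈ Γ) : False :=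
  (consistent_iff_not_dv.1 hΓ.1) (Dv.mp (Dv.hyp h2) (Dv.hyp h1))

lemma mcs_bot_not_mem {Γ : Set Formula} (hΓ : MCS Mschema Γ) : Formula.bot ∉ Γ := by
  intro h
  exact (consistent_iff_not_dv.1 hΓ.1) (Dv.hyp h)

lemma mcs_neg_mem_iff {Γ : Set Formula} (hΓ : MCS Mschema Γ) {φ : Formula} :
    φ.neg ∈ Γ ↔ φ ∉ Γ := by
  constructor
  · intro h h'; exact mcs_no_contra hΓ h' h
  · intro h; rcases hΓ.2 φ with h' | h'; exacts [absurd h' h, h']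

lemma mcs_dne {Γ : Set Formula} (hΓ : MCS Mschema Γ) {φ : Formula}
    (h : φ.neg.neg ∈ Γ) : φ ∈ Γ := mcs_dv hΓ (Dv.dne (Dv.hyp h))

lemma mcs_and_iff {Γ : Set Formula} (hΓ : MCS Mschema Γ) {φ ψ : Formula} :
    φ.conj ψ ∈ Γ ↔ φ ∈ Γ ∧ ψ ∈ Γ := by
  constructor
  · intro h
    exact ⟨mcs_mp hΓ (mem_of_pv hΓ (t_and_left φ ψ)) h,
           mcs_mp hΓ (mem_of_pv hΓ (t_and_right φ ψ)) h⟩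
  · rintro ⟨h1, h2⟩
    exact mcs_dv hΓ (Dv.mp (Dv.mp (Dv.thm (t_and_intro φ ψ)) (Dv.hyp h1)) (Dv.hyp h2))

/-! ### Derived modal theorems -/

lemma pv_nec {φ : Formula} (h : Pv φ) : Pv (Formula.box φ) := ILProof.nec h

lemma box_mono {φ ψ : Formula} (h : Pv (φ.impl ψ)) : Pv ((Formula.box φ).impl (Formula.box ψ)) :=
  pv_mp (ILProof.L1 _ _) (pv_nec h)

lemma rhd_of_imp {φ ψ : Formula} (h : Pv (φ.impl ψ)) : Pv (φ.rhd ψ) :=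
  pv_mp (ILProof.J1 _ _) (pv_nec h)

lemma pv_and_intro {φ ψ : Formula} (h1 : Pv φ) (h2 : Pv ψ) : Pv (φ.conj ψ) :=
  pv_mp (pv_mp (t_and_intro _ _) h1) h2

lemma pv_rhd_trans {φ ψ χ : Formula} (h1 : Pv (φ.rhd ψ)) (h2 : Pv (ψ.rhd χ)) : Pv (φ.rhd χ) :=
  pv_mp (ILProof.J2 _ _ _) (pv_and_intro h1 h2)

lemma mcs_rhd_trans {Γ : Set Formula} (hΓ : MCS Mschema Γ) {φ ψ χ : Formula}
    (h1 : φ.rhd ψ ∈ Γ) (h2 : ψ.rhd χ ∈ Γ) : φ.rhd χ ∈ Γ := by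
  apply mcs_dv hΓ
  exact Dv.mp (Dv.thm (ILProof.J2 _ _ _))
    (Dv.mp (Dv.mp (Dv.thm (t_and_intro _ _)) (Dv.hyp h1)) (Dv.hyp h2))

lemma mcs_rhd_mono_r {Γ : Set Formula} (hΓ : MCS Mschema Γ) {φ ψ χ : Formula}
    (h1 : φ.rhd ψ ∈ Γ) (h2 : Pv (ψ.impl χ)) : φ.rhd χ ∈ Γ :=
  mcs_rhd_trans hΓ h1 (mem_of_pv hΓ (rhd_of_imp h2))

lemma mcs_rhd_mono_l {Γ : Set Formula} (hΓ : MCS Mschema Γ) {φ ψ χ : Formula}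
    (h1 : φ.rhd ψ ∈ Γ) (h2 : Pv (χ.impl φ)) : χ.rhd ψ ∈ Γ :=
  mcs_rhd_trans hΓ (mem_of_pv hΓ (rhd_of_imp h2)) h1

lemma mcs_rhd_disj {Γ : Set Formula} (hΓ : MCS Mschema Γ) {φ ψ χ : Formula}
    (h1 : φ.rhd χ ∈ Γ) (h2 : ψ.rhd χ ∈ Γ) : (φ.disj ψ).rhd χ ∈ Γ := by
  apply mcs_dv hΓ
  exact Dv.mp (Dv.thm (ILProof.J3 _ _ _))
    (Dv.mp (Dv.mp (Dv.thm (t_and_intro _ _)) (Dv.hyp h1)) (Dv.hyp h2))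

-- ◇⊥ is refutable
lemma pv_not_dia_bot : Pv (Formula.bot.dia.neg) := by
  have h1 : Pv (Formula.box Formula.bot.neg) := pv_nec (pv_id _)
  exact pv_mp (t_dni _) h1

lemma rhd_bot_imp_boxneg (φ : Formula) : Pv ((φ.rhd Formula.bot).impl (Formula.box φ.neg)) := by
  have j4 := ILProof.J4 (Ax := Mschema) φ Formula.bot
  -- j4 : (φ▷⊥) → (◇φ → ◇⊥)
  apply pv_of_dv; apply Dv.ded
  have hdia : Dv (insert (φ.rhd Formula.bot) ∅) (φ.dia.impl Formula.bot.dia) :=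
    Dv.mp (Dv.thm j4) Dv.h0
  -- ¬◇φ, i.e. ¬¬□¬φ
  have hnn : Dv (insert (φ.rhd Formula.bot) ∅) ((Formula.box φ.neg).neg.neg) := by
    apply Dv.ded
    exact Dv.mp (Dv.thm pv_not_dia_bot) (Dv.mp (Dv.weak (by intro x hx; exact Set.mem_insert_of_mem _ hx) hdia) Dv.h0)
  exact Dv.dne hnn

lemma box_neg_imp_rhd (φ ψ : Formula) : Pv ((Formula.box φ.neg).impl (φ.rhd ψ)) := by
  have h1 : Pv ((Formula.box φ.neg).impl (φ.rhd Formula.bot)) := ILProof.J1 φ Formula.bot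
  have h2 : Pv ((φ.rhd Formula.bot).impl (φ.rhd ψ)) := by
    apply pv_of_dv; apply Dv.ded
    exact Dv.mp (Dv.thm (ILProof.J2 _ _ _))
      (Dv.mp (Dv.mp (Dv.thm (t_and_intro _ _)) Dv.h0) (Dv.thm (rhd_of_imp (t_efq ψ))))
  exact t_trans h1 h2

lemma box_conj_int (φ ψ : Formula) :
    Pv ((Formula.box φ).impl ((Formula.box ψ).impl (Formula.box (φ.conj ψ)))) :=
  t_trans (box_mono (t_and_intro φ ψ)) (ILProof.L1 _ _)

lemma box_selfconj (E : Formula) :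
    Pv ((Formula.box E).impl (Formula.box (E.conj (Formula.box E)))) := by
  apply pv_of_dv; apply Dv.ded
  exact Dv.mp (Dv.mp (Dv.thm (box_conj_int _ _)) Dv.h0) (Dv.mp (Dv.thm (ILProof.L2 _)) Dv.h0)

/-- The key E-conjoining lemma: □E → (X▷Y → X▷(Y∧(E∧□E))). -/
lemma econj (E X Y : Formula) :
    Pv ((Formula.box E).impl ((X.rhd Y).impl (X.rhd (Y.conj (E.conj (Formula.box E)))))) := by
  set C := E.conj (Formula.box E) with hC
  apply pv_of_dv; apply Dv.ded; apply Dv.ded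
  -- hyps: □E, X▷Y ⊢ X▷(Y∧C)
  have hboxC : Dv (insert (X.rhd Y) (insert (Formula.box E) ∅)) (Formula.box C) :=
    Dv.mp (Dv.thm (box_selfconj E)) Dv.h1
  have hs2 : Pv ((Formula.box C).impl (Formula.box ((Y.conj C.neg)).neg)) := by
    apply box_mono
    apply pv_of_dv; apply Dv.ded; apply Dv.ded
    -- hyps: C, Y∧¬C ⊢ ⊥
    exact Dv.mp (Dv.mp (Dv.thm (t_and_right _ _)) Dv.h0) Dv.h1
  have hc3 : Dv (insert (X.rhd Y) (insert (Formula.box E) ∅)) ((Y.conj C.neg).rhd (Y.conj C)) :=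
    Dv.mp (Dv.thm (box_neg_imp_rhd _ _)) (Dv.mp (Dv.thm hs2) hboxC)
  have hs4 : Pv (Y.rhd ((Y.conj C).disj (Y.conj C.neg))) := by
    apply rhd_of_imp
    apply pv_of_dv; apply Dv.ded; apply Dv.ded
    -- hyps: Y, ¬(Y∧C) ⊢ (Y∧¬C)
    refine Dv.mp (Dv.mp (Dv.thm (t_and_intro _ _)) Dv.h1) ?_
    apply Dv.ded
    -- + C ⊢ ⊥
    exact Dv.mp Dv.h1 (Dv.mp (Dv.mp (Dv.thm (t_and_intro _ _)) Dv.h2) Dv.h0)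
  have hc4 : Dv (insert (X.rhd Y) (insert (Formula.box E) ∅)) (((Y.conj C).disj (Y.conj C.neg)).rhd (Y.conj C)) :=
    Dv.mp (Dv.thm (ILProof.J3 _ _ _))
      (Dv.mp (Dv.mp (Dv.thm (t_and_intro _ _)) (Dv.thm (rhd_of_imp (pv_id _)))) hc3)
  have hc5 : Dv (insert (X.rhd Y) (insert (Formula.box E) ∅)) (Y.rhd (Y.conj C)) :=
    Dv.mp (Dv.thm (ILProof.J2 _ _ _))
      (Dv.mp (Dv.mp (Dv.thm (t_and_intro _ _)) (Dv.thm hs4)) hc4)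
  exact Dv.mp (Dv.thm (ILProof.J2 _ _ _))
    (Dv.mp (Dv.mp (Dv.thm (t_and_intro _ _)) Dv.h0) hc5)

lemma m_ax (X Y C : Formula) :
    Pv ((X.rhd Y).impl ((X.conj (Formula.box C)).rhd (Y.conj (Formula.box C)))) :=
  ILProof.ax ⟨X, Y, C, rfl⟩

/-! ### Existence lemmas -/

def SE (Γ : Set Formula) : Set Formula :=
  {ψ | ∃ E, Formula.box E ∈ Γ ∧ ψ = E.conj (Formula.box E)}

def SW (Δ : Set Formula) : Set Formula :=
  {ψ | ∃ W, Formula.box W ∈ Δ ∧ ψ = Formula.box W}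

def S1 (Y : Formula) (Γ : Set Formula) : Set Formula :=
  {ψ | ∃ Z : Formula, Z.rhd Y ∈ Γ ∧ ψ = (Z.neg).conj (Formula.box Z.neg)}

lemma boxfold {Γ : Set Formula} (hΓ : MCS Mschema Γ) :
    ∀ L : List Formula, (∀ ψ ∈ L, ψ ∈ SE Γ) → ∀ χ : Formula,
      Pv (L.foldr Formula.impl χ) → Formula.box χ ∈ Γ := by
  intro L
  induction L with
  | nil => intro _ χ h; exact mem_of_pv hΓ (pv_nec h)
  | cons ψ L ih =>
    intro hm χ h
    have h' : Pv (L.foldr Formula.impl (ψ.impl χ)) :=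
      pv_mp (fold_exchange_int L ψ χ) h
    have hbox : Formula.box (ψ.impl χ) ∈ Γ :=
      ih (fun x hx => hm x (List.mem_cons_of_mem _ hx)) _ h'
    obtain ⟨E, hE, rfl⟩ := hm ψ (List.mem_cons_self)
    have hbψ : Formula.box (E.conj (Formula.box E)) ∈ Γ :=
      mcs_mp hΓ (mem_of_pv hΓ (box_selfconj E)) hE
    exact mcs_mp hΓ (mcs_mp hΓ (mem_of_pv hΓ (ILProof.L1 _ _)) hbox) hbψ

lemma ex_box {Γ : Set Formula} {X : Formula} (hΓ : MCS Mschema Γ)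
    (h : Formula.box X ∉ Γ) :
    ∃ Δ, MCS Mschema Δ ∧ prec Γ Δ ∧ X.neg ∈ Δ := by
  have hcons : Consistent Mschema (insert X.neg (SE Γ)) := by
    rw [consistent_iff_not_dv]
    intro hd
    have hd2 : Dv (SE Γ) (X.neg.neg) := Dv.ded hd
    obtain ⟨L, hm, hp⟩ := dv_fold hd2
    have hp2 : Pv (L.foldr Formula.impl X) := pv_mp (fold_mono (ILProof.dne X)) hp
    exact h (boxfold hΓ L hm X hp2)
  obtain ⟨Δ, hsub, hΔ⟩ := lindenbaum hcons
  refine ⟨Δ, hΔ, ?_, hsub (Set.mem_insert _ _)⟩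
  intro E hE
  have : E.conj (Formula.box E) ∈ Δ := hsub (Set.mem_insert_of_mem _ ⟨E, hE, rfl⟩)
  exact (mcs_and_iff hΔ).1 this

/-- Main negative claim: if a list from S1 ∪ SE implies χ, then ¬χ ▷ Y ∈ Γ. -/
lemma claim_neg {Γ : Set Formula} (hΓ : MCS Mschema Γ) {Y : Formula} :
    ∀ L : List Formula, (∀ ψ ∈ L, ψ ∈ S1 Y Γ ∪ SE Γ) → ∀ χ : Formula,
      Pv (L.foldr Formula.impl χ) → (χ.neg.rhd Y) ∈ Γ := by
  intro L
  induction L with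
  | nil =>
    intro _ χ h
    have h1 : Pv (χ.neg.impl Y) := t_trans (pv_mp (t_dni χ) h) (t_efq Y)
    exact mem_of_pv hΓ (rhd_of_imp h1)
  | cons ψ L ih =>
    intro hm χ h
    have h' : Pv (L.foldr Formula.impl (ψ.impl χ)) := pv_mp (fold_exchange_int L ψ χ) h
    have hIH : ((ψ.impl χ).neg.rhd Y) ∈ Γ :=
      ih (fun x hx => hm x (List.mem_cons_of_mem _ hx)) _ h'
    -- generic step: (¬χ ∧ ψ) ▷ Y ∈ Γ
    have hb : Pv ((χ.neg.conj ψ).impl ((ψ.impl χ).neg)) := by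
      apply pv_of_dv; apply Dv.ded; apply Dv.ded
      -- hyps: ¬χ∧ψ, ψ→χ ⊢ ⊥
      refine Dv.mp (Dv.mp (Dv.thm (t_and_left _ _)) Dv.h1) ?_
      exact Dv.mp Dv.h0 (Dv.mp (Dv.thm (t_and_right _ _)) Dv.h1)
    have hd5 : ((χ.neg.conj ψ).rhd Y) ∈ Γ := mcs_rhd_mono_l hΓ hIH hb
    rcases hm ψ (List.mem_cons_self) with hψ | hψ
    · -- ψ = ¬Z ∧ □¬Z with Z ▷ Y ∈ Γ
      have hψ' : ∃ Z : Formula, Z.rhd Y ∈ Γ ∧ ψ = (Z.neg).conj (Formula.box Z.neg) := hψ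
      obtain ⟨Z, hZ, rfl⟩ := hψ'
      have hd1 : ((Z.disj Z.dia).rhd Y) ∈ Γ := by
        refine mcs_rhd_disj hΓ hZ ?_
        exact mcs_rhd_trans hΓ (mem_of_pv hΓ (ILProof.J5 Z)) hZ
      have hd2 : Pv (((Z.neg.conj (Formula.box Z.neg)).neg).impl (Z.disj Z.dia)) := by
        apply pv_of_dv; apply Dv.ded; apply Dv.ded
        -- hyps: ¬(¬Z∧□¬Z), ¬Z ⊢ ◇Z = ¬□¬Z
        apply Dv.ded
        -- + □¬Z ⊢ ⊥
        exact Dv.mp Dv.h2 (Dv.mp (Dv.mp (Dv.thm (t_and_intro _ _)) Dv.h1) Dv.h0)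
      have hd3 : (((Z.neg.conj (Formula.box Z.neg)).neg).rhd Y) ∈ Γ :=
        mcs_rhd_mono_l hΓ hd1 hd2
      have hd4 : Pv (χ.neg.impl ((χ.neg.conj (Z.neg.conj (Formula.box Z.neg))).disj
          ((Z.neg.conj (Formula.box Z.neg)).neg))) := by
        apply pv_of_dv; apply Dv.ded; apply Dv.ded
        -- hyps: ¬χ, ¬(¬χ∧ψ) ⊢ ¬ψ
        apply Dv.ded
        -- + ψ ⊢ ⊥
        exact Dv.mp Dv.h1 (Dv.mp (Dv.mp (Dv.thm (t_and_intro _ _)) Dv.h2) Dv.h0)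
      have hd6 := mcs_rhd_disj hΓ hd5 hd3
      exact mcs_rhd_mono_l hΓ hd6 hd4
    · -- ψ = E ∧ □E with □E ∈ Γ
      have hψ' : ∃ E, Formula.box E ∈ Γ ∧ ψ = E.conj (Formula.box E) := hψ
      obtain ⟨E, hE, rfl⟩ := hψ'
      have ha : (χ.neg.rhd (χ.neg.conj (E.conj (Formula.box E)))) ∈ Γ :=
        mcs_mp hΓ (mcs_mp hΓ (mem_of_pv hΓ (econj E χ.neg χ.neg)) hE)
          (mem_of_pv hΓ (rhd_of_imp (pv_id _)))
      exact mcs_rhd_trans hΓ ha hd5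

lemma ex_rhd_neg {Γ : Set Formula} {X Y : Formula} (hΓ : MCS Mschema Γ)
    (h : X.rhd Y ∉ Γ) :
    ∃ Δ, MCS Mschema Δ ∧ prec Γ Δ ∧ critSucc Y Γ Δ ∧ X ∈ Δ := by
  have hcons : Consistent Mschema (insert X (S1 Y Γ ∪ SE Γ)) := by
    rw [consistent_iff_not_dv]
    intro hd
    have hd2 : Dv (S1 Y Γ ∪ SE Γ) X.neg := Dv.ded hd
    obtain ⟨L, hm, hp⟩ := dv_fold hd2
    have := claim_neg hΓ L hm X.neg hp
    exact h (mcs_rhd_mono_l hΓ this (t_dni X))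
  obtain ⟨Δ, hsub, hΔ⟩ := lindenbaum hcons
  refine ⟨Δ, hΔ, ?_, ?_, hsub (Set.mem_insert _ _)⟩
  · intro E hE
    have : E.conj (Formula.box E) ∈ Δ :=
      hsub (Set.mem_insert_of_mem _ (Or.inr ⟨E, hE, rfl⟩))
    exact (mcs_and_iff hΔ).1 this
  · intro Z hZ
    have : (Z.neg).conj (Formula.box Z.neg) ∈ Δ :=
      hsub (Set.mem_insert_of_mem _ (Or.inl ⟨Z, hZ, rfl⟩))
    exact (mcs_and_iff hΔ).1 this

lemma pv_box_top {Γ : Set Formula} (hΓ : MCS Mschema Γ) :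
    Formula.box Formula.top ∈ Γ :=
  mem_of_pv hΓ (pv_nec (pv_id Formula.bot))

/-- Consolidation: a list from SE Γ ∪ SW Δ implying χ yields single E, W. -/
lemma consolidate {Γ Δ : Set Formula} (hΓ : MCS Mschema Γ) (hΔ : MCS Mschema Δ) :
    ∀ L : List Formula, (∀ ψ ∈ L, ψ ∈ SE Γ ∪ SW Δ) → ∀ χ : Formula,
      Pv (L.foldr Formula.impl χ) →
      ∃ E W : Formula, Formula.box E ∈ Γ ∧ Formula.box W ∈ Δ ∧
        Pv (((E.conj (Formula.box E)).conj (Formula.box W)).impl χ) := by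
  intro L
  induction L with
  | nil =>
    intro _ χ h
    exact ⟨Formula.top, Formula.top, pv_box_top hΓ, pv_box_top hΔ,
      pv_mp (ILProof.k1 _ _) h⟩
  | cons ψ L ih =>
    intro hm χ h
    have h' : Pv (L.foldr Formula.impl (ψ.impl χ)) := pv_mp (fold_exchange_int L ψ χ) h
    obtain ⟨E, W, hE, hW, hK⟩ := ih (fun x hx => hm x (List.mem_cons_of_mem _ hx)) _ h'
    rcases hm ψ (List.mem_cons_self) with hψ | hψ
    · -- ψ = E' ∧ □E'
      obtain ⟨E', hE', rfl⟩ := hψ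
      refine ⟨E'.conj E, W, mcs_mp hΓ (mcs_mp hΓ (mem_of_pv hΓ (box_conj_int E' E)) hE') hE,
        hW, ?_⟩
      apply pv_of_dv; apply Dv.ded
      -- hyp: K₂ := ((E'∧E) ∧ □(E'∧E)) ∧ □W ⊢ χ
      have e2 : Dv (insert (((E'.conj E).conj (Formula.box (E'.conj E))).conj (Formula.box W)) ∅)
          ((E'.conj E)) := Dv.mp (Dv.thm (t_and_left _ _)) (Dv.mp (Dv.thm (t_and_left _ _)) Dv.h0)
      have be2 : Dv (insert (((E'.conj E).conj (Formula.box (E'.conj E))).conj (Formula.box W)) ∅)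
          (Formula.box (E'.conj E)) := Dv.mp (Dv.thm (t_and_right _ _)) (Dv.mp (Dv.thm (t_and_left _ _)) Dv.h0)
      have bw : Dv (insert (((E'.conj E).conj (Formula.box (E'.conj E))).conj (Formula.box W)) ∅)
          (Formula.box W) := Dv.mp (Dv.thm (t_and_right _ _)) Dv.h0
      have hψv := Dv.mp (Dv.mp (Dv.thm (t_and_intro _ _)) (Dv.mp (Dv.thm (t_and_left _ _)) e2))
          (Dv.mp (Dv.thm (box_mono (t_and_left _ _))) be2)
      have hKv := Dv.mp (Dv.mp (Dv.thm (t_and_intro _ _))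
          (Dv.mp (Dv.mp (Dv.thm (t_and_intro _ _)) (Dv.mp (Dv.thm (t_and_right _ _)) e2))
            (Dv.mp (Dv.thm (box_mono (t_and_right _ _))) be2))) bw
      exact Dv.mp (Dv.mp (Dv.thm hK) hKv) hψv
    · -- ψ = □W'
      obtain ⟨W', hW', rfl⟩ := hψ
      refine ⟨E, W'.conj W, hE,
        mcs_mp hΔ (mcs_mp hΔ (mem_of_pv hΔ (box_conj_int W' W)) hW') hW, ?_⟩
      apply pv_of_dv; apply Dv.ded
      -- hyp: K₂ := (E ∧ □E) ∧ □(W'∧W) ⊢ χ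
      have bw2 : Dv (insert ((E.conj (Formula.box E)).conj (Formula.box (W'.conj W))) ∅)
          (Formula.box (W'.conj W)) := Dv.mp (Dv.thm (t_and_right _ _)) Dv.h0
      have hKv := Dv.mp (Dv.mp (Dv.thm (t_and_intro _ _)) (Dv.mp (Dv.thm (t_and_left _ _)) Dv.h0))
          (Dv.mp (Dv.thm (box_mono (t_and_right _ _))) bw2)
      have hψv := Dv.mp (Dv.thm (box_mono (t_and_left _ _))) bw2
      exact Dv.mp (Dv.mp (Dv.thm hK) hKv) hψv

lemma ex_rhd_pos {Γ Δ : Set Formula} {X Y D : Formula}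
    (hΓ : MCS Mschema Γ) (hΔ : MCS Mschema Δ)
    (hXY : X.rhd Y ∈ Γ) (_hprec : prec Γ Δ) (hcrit : critSucc D Γ Δ) (hX : X ∈ Δ) :
    ∃ Θ, MCS Mschema Θ ∧ Y ∈ Θ ∧ D.neg ∈ Θ ∧ prec Γ Θ ∧ boxSub Δ Θ := by
  have hcons : Consistent Mschema (insert Y (insert D.neg (SE Γ ∪ SW Δ))) := by
    rw [consistent_iff_not_dv]
    intro hd
    have hd2 : Dv (SE Γ ∪ SW Δ) (D.neg.impl (Y.impl Formula.bot)) := Dv.ded (Dv.ded hd)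
    obtain ⟨L, hm, hp⟩ := dv_fold hd2
    obtain ⟨E, W, hE, hW, hK⟩ := consolidate hΓ hΔ L hm _ hp
    -- hK : ((E∧□E)∧□W) → (¬D → (Y → ⊥))
    have g4 : Pv (((Y.conj (E.conj (Formula.box E))).conj (Formula.box W)).impl D) := by
      apply pv_of_dv; apply Dv.ded
      set K := (Y.conj (E.conj (Formula.box E))).conj (Formula.box W) with hKdef
      have hY : Dv (insert K ∅) Y :=
        Dv.mp (Dv.thm (t_and_left _ _)) (Dv.mp (Dv.thm (t_and_left _ _)) Dv.h0)
      have hC : Dv (insert K ∅) (E.conj (Formula.box E)) :=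
        Dv.mp (Dv.thm (t_and_right _ _)) (Dv.mp (Dv.thm (t_and_left _ _)) Dv.h0)
      have hBW : Dv (insert K ∅) (Formula.box W) := Dv.mp (Dv.thm (t_and_right _ _)) Dv.h0
      have hKv : Dv (insert K ∅) ((E.conj (Formula.box E)).conj (Formula.box W)) :=
        Dv.mp (Dv.mp (Dv.thm (t_and_intro _ _)) hC) hBW
      have himp : Dv (insert K ∅) (D.neg.impl (Y.impl Formula.bot)) := Dv.mp (Dv.thm hK) hKv
      apply Dv.dne
      apply Dv.ded
      exact Dv.mp (Dv.mp (Dv.weak (Set.subset_insert _ _) himp) Dv.h0)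
        (Dv.weak (Set.subset_insert _ _) hY)
    have g2 : X.rhd (Y.conj (E.conj (Formula.box E))) ∈ Γ :=
      mcs_mp hΓ (mcs_mp hΓ (mem_of_pv hΓ (econj E X Y)) hE) hXY
    have g3 : (X.conj (Formula.box W)).rhd
        ((Y.conj (E.conj (Formula.box E))).conj (Formula.box W)) ∈ Γ :=
      mcs_mp hΓ (mem_of_pv hΓ (m_ax X (Y.conj (E.conj (Formula.box E))) W)) g2
    have g5 : (X.conj (Formula.box W)).rhd D ∈ Γ := mcs_rhd_mono_r hΓ g3 g4
    have g6 : (X.conj (Formula.box W)).neg ∈ Δ := (hcrit _ g5).1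
    have g7 : X.conj (Formula.box W) ∈ Δ := (mcs_and_iff hΔ).2 ⟨hX, hW⟩
    exact mcs_no_contra hΔ g7 g6
  obtain ⟨Θ, hsub, hΘ⟩ := lindenbaum hcons
  refine ⟨Θ, hΘ, hsub (Set.mem_insert _ _),
    hsub (Set.mem_insert_of_mem _ (Set.mem_insert _ _)), ?_, ?_⟩
  · intro E hE
    have : E.conj (Formula.box E) ∈ Θ :=
      hsub (Set.mem_insert_of_mem _ (Set.mem_insert_of_mem _ (Or.inl ⟨E, hE, rfl⟩)))
    exact (mcs_and_iff hΘ).1 this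
  · intro W hW
    exact hsub (Set.mem_insert_of_mem _ (Set.mem_insert_of_mem _ (Or.inr ⟨W, hW, rfl⟩)))

/-! ### The model -/

structure MW where
  Δ : Set Formula
  lab : Formula
  mcs : MCS Mschema Δ

/-- canonical accessibility -/
def cR (w v : MW) : Prop := prec w.Δ v.Δ ∧ critSucc v.lab w.Δ v.Δ

/-- canonical S-relation (for a canonical world) -/
def cS (w v u : MW) : Prop :=
  prec w.Δ u.Δ ∧ boxSub v.Δ u.Δ ∧ v.lab.neg ∈ u.Δ ∧ u.lab = v.lab

inductive W where
  | root : W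
  | c : MW → W

def Rel (u₀ : MW) : W → W → Prop
  | W.c x, W.c y => cR x y
  | W.root, W.c y => y = u₀ ∨ Relation.TransGen cR u₀ y
  | _, W.root => False

def SS (u₀ : MW) : W → W → W → Prop
  | W.c x, W.c y, W.c z => cS x y z
  | W.root, W.c y, W.c z =>
      Rel u₀ W.root (W.c y) ∧ Rel u₀ W.root (W.c z) ∧ boxSub y.Δ z.Δ
  | _, _, _ => False

def force (u₀ : MW) : Formula → W → Prop
  | Formula.bot, _ => False
  | Formula.var _, W.root => False
  | Formula.var n, W.c x => Formula.var n ∈ x.Δ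
  | Formula.impl φ ψ, w => force u₀ φ w → force u₀ ψ w
  | Formula.box φ, w => ∀ v, Rel u₀ w v → force u₀ φ v
  | Formula.rhd φ ψ, w => ∀ v, Rel u₀ w v → force u₀ φ v →
      ∃ u, SS u₀ w v u ∧ force u₀ ψ u

lemma not_rel_root (u₀ : MW) (w : W) : ¬ Rel u₀ w W.root := by
  cases w <;> exact fun h => h

lemma rel_root_closed {u₀ : MW} {y z : MW}
    (h : Rel u₀ W.root (W.c y)) (hyz : cR y z) : Rel u₀ W.root (W.c z) := by
  rcases h with rfl | htg
  · exact Or.inr (Relation.TransGen.single hyz)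
  · exact Or.inr (htg.tail hyz)

lemma force_neg {u₀ : MW} {φ : Formula} {w : W} :
    force u₀ φ.neg w ↔ ¬ force u₀ φ w := Iff.rfl

lemma force_conj {u₀ : MW} {φ ψ : Formula} {w : W} :
    force u₀ (φ.conj ψ) w ↔ force u₀ φ w ∧ force u₀ ψ w := by
  show ((force u₀ φ w → (force u₀ ψ w → False)) → False) ↔ _
  constructor
  · intro h
    constructor
    · by_contra hφ; exact h (fun h1 _ => hφ h1)
    · by_contra hψ; exact h (fun _ h2 => hψ h2)
  · rintro ⟨h1, h2⟩ h; exact h h1 h2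

lemma force_disj {u₀ : MW} {φ ψ : Formula} {w : W} :
    force u₀ (φ.disj ψ) w ↔ (force u₀ φ w ∨ force u₀ ψ w) := by
  show ((force u₀ φ w → False) → force u₀ ψ w) ↔ _
  constructor
  · intro h
    by_cases hφ : force u₀ φ w
    · exact Or.inl hφ
    · exact Or.inr (h hφ)
  · rintro (h | h) hn
    · exact absurd h hn
    · exact h

lemma force_dia {u₀ : MW} {φ : Formula} {w : W} :
    force u₀ φ.dia w ↔ ∃ v, Rel u₀ w v ∧ force u₀ φ v := by
  show ((∀ v, Rel u₀ w v → (force u₀ φ v → False)) → False) ↔ _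
  constructor
  · intro h
    by_contra hc
    push_neg at hc
    exact h (fun v hv hf => hc v hv hf)
  · rintro ⟨v, hv, hf⟩ h
    exact h v hv hf

lemma critSucc_bot {Γ Δ : Set Formula} (hΓ : MCS Mschema Γ) (hprec : prec Γ Δ) :
    critSucc Formula.bot Γ Δ := by
  intro Z hZ
  have hb : Formula.box Z.neg ∈ Γ :=
    mcs_mp hΓ (mem_of_pv hΓ (rhd_bot_imp_boxneg Z)) hZ
  exact hprec _ hb

lemma mcs_imp_iff {Γ : Set Formula} (hΓ : MCS Mschema Γ) {φ ψ : Formula} :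
    φ.impl ψ ∈ Γ ↔ (φ ∈ Γ → ψ ∈ Γ) := by
  constructor
  · intro h hφ; exact mcs_mp hΓ h hφ
  · intro h
    by_cases hφ : φ ∈ Γ
    · exact mcs_dv hΓ (Dv.mp (Dv.thm (ILProof.k1 _ _)) (Dv.hyp (h hφ)))
    · have hn : φ.neg ∈ Γ := (mcs_neg_mem_iff hΓ).2 hφ
      apply mcs_dv hΓ
      refine Dv.mp (Dv.thm ?_) (Dv.hyp hn)
      apply pv_of_dv; apply Dv.ded; apply Dv.ded
      exact Dv.mp (Dv.thm (t_efq _)) (Dv.mp Dv.h1 Dv.h0)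

/-- THE TRUTH LEMMA -/
lemma truth (u₀ : MW) : ∀ (φ : Formula) (x : MW), force u₀ φ (W.c x) ↔ φ ∈ x.Δ := by
  intro φ
  induction φ with
  | bot =>
    intro x
    simp only [force]
    exact ⟨False.elim, fun h => mcs_bot_not_mem x.mcs h⟩
  | var n => intro x; exact Iff.rfl
  | impl φ ψ ihφ ihψ =>
    intro x
    show (force u₀ φ (W.c x) → force u₀ ψ (W.c x)) ↔ _
    rw [ihφ x, ihψ x, mcs_imp_iff x.mcs]
  | box φ ih =>
    intro x
    constructor
    · intro h
      by_contra hmem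
      obtain ⟨Δ, hΔ, hprec, hneg⟩ := ex_box x.mcs hmem
      set y : MW := ⟨Δ, Formula.bot, hΔ⟩ with hy
      have hrel : Rel u₀ (W.c x) (W.c y) := ⟨hprec, critSucc_bot x.mcs hprec⟩
      have := (ih y).1 (h (W.c y) hrel)
      exact mcs_no_contra hΔ this hneg
    · intro h v hv
      cases v with
      | root => exact absurd hv (not_rel_root u₀ _)
      | c y => exact (ih y).2 ((hv.1 φ h).1)
  | rhd φ ψ ihφ ihψ =>
    intro x
    constructor
    · intro h
      by_contra hmem
      obtain ⟨Δ, hΔ, hprec, hcrit, hφ⟩ := ex_rhd_neg x.mcs hmem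
      set y : MW := ⟨Δ, ψ, hΔ⟩ with hy
      have hrel : Rel u₀ (W.c x) (W.c y) := ⟨hprec, hcrit⟩
      obtain ⟨u, hSS, hfψ⟩ := h (W.c y) hrel ((ihφ y).2 hφ)
      cases u with
      | root => exact hSS.elim
      | c z =>
        have hψz : ψ ∈ z.Δ := (ihψ z).1 hfψ
        have hnegψ : ψ.neg ∈ z.Δ := hSS.2.2.1
        exact mcs_no_contra z.mcs hψz hnegψ
    · intro h v hv hfφ
      cases v with
      | root => exact absurd hv (not_rel_root u₀ _)
      | c y =>
        have hφy : φ ∈ y.Δ := (ihφ y).1 hfφ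
        obtain ⟨Θ, hΘ, hψΘ, hnegD, hprecΘ, hboxΘ⟩ :=
          ex_rhd_pos x.mcs y.mcs h hv.1 hv.2 hφy
        refine ⟨W.c ⟨Θ, y.lab, hΘ⟩, ⟨hprecΘ, hboxΘ, hnegD, rfl⟩, ?_⟩
        exact (ihψ _).2 hψΘ

lemma force_c_of_pv (u₀ : MW) {φ : Formula} (h : Pv φ) (x : MW) :
    force u₀ φ (W.c x) := (truth u₀ φ x).2 (mem_of_pv x.mcs h)

lemma boxSub_of_cR {y z : MW} (h : cR y z) : boxSub y.Δ z.Δ :=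
  fun A hA => (h.1 A hA).2

/-- Soundness of ILM on the surgered model. -/
lemma sound (u₀ : MW) {φ : Formula} (h : Pv φ) : ∀ w : W, force u₀ φ w := by
  induction h with
  | @ax φ hφ =>
    intro w
    cases w with
    | c x => exact force_c_of_pv u₀ (ILProof.ax hφ) x
    | root =>
      obtain ⟨X, Y, C, rfl⟩ := hφ
      intro h1 v hv hXC
      cases v with
      | root => exact hv.elim
      | c y =>
        obtain ⟨hX, hbC⟩ := force_conj.1 hXC
        obtain ⟨u, hSS, hY⟩ := h1 (W.c y) hv hX
        cases u with
        | root => exact hSS.elim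
        | c z =>
          have hbCz : Formula.box C ∈ z.Δ := hSS.2.2 _ ((truth u₀ _ y).1 hbC)
          exact ⟨W.c z, hSS, force_conj.2 ⟨hY, (truth u₀ _ z).2 hbCz⟩⟩
  | k1 φ ψ =>
    intro w
    cases w with
    | c x => exact force_c_of_pv u₀ (ILProof.k1 φ ψ) x
    | root => intro h1 _; exact h1
  | k2 φ ψ χ =>
    intro w
    cases w with
    | c x => exact force_c_of_pv u₀ (ILProof.k2 φ ψ χ) x
    | root => intro h1 h2 h3; exact h1 h3 (h2 h3)
  | dne φ =>
    intro w
    cases w with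
    | c x => exact force_c_of_pv u₀ (ILProof.dne φ) x
    | root =>
      intro h
      by_contra hc
      exact h hc
  | L1 φ ψ =>
    intro w
    cases w with
    | c x => exact force_c_of_pv u₀ (ILProof.L1 φ ψ) x
    | root => intro h1 h2 v hv; exact h1 v hv (h2 v hv)
  | L2 φ =>
    intro w
    cases w with
    | c x => exact force_c_of_pv u₀ (ILProof.L2 φ) x
    | root =>
      intro h v hv
      cases v with
      | root => exact hv.elim
      | c y =>
        intro v' hv'
        cases v' with
        | root => exact absurd hv' (not_rel_root u₀ _)
        | c z => exact h (W.c z) (rel_root_closed hv hv')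
  | L3 φ =>
    intro w
    cases w with
    | c x => exact force_c_of_pv u₀ (ILProof.L3 φ) x
    | root =>
      intro h v hv
      cases v with
      | root => exact hv.elim
      | c y =>
        have hboxed : Formula.box ((Formula.box φ).impl φ) ∈ y.Δ := by
          by_contra hmem
          obtain ⟨Δ, hΔ, hprec, hneg⟩ := ex_box y.mcs hmem
          set z : MW := ⟨Δ, Formula.bot, hΔ⟩ with hz
          have hrel : Rel u₀ W.root (W.c z) :=
            rel_root_closed hv ⟨hprec, critSucc_bot y.mcs hprec⟩
          have := (truth u₀ _ z).1 (h (W.c z) hrel)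
          exact mcs_no_contra hΔ this hneg
        have hboxφ : Formula.box φ ∈ y.Δ :=
          mcs_mp y.mcs (mem_of_pv y.mcs (ILProof.L3 φ)) hboxed
        have himp : (Formula.box φ).impl φ ∈ y.Δ :=
          (truth u₀ _ y).1 (h (W.c y) hv)
        exact (truth u₀ _ y).2 (mcs_mp y.mcs himp hboxφ)
  | J1 φ ψ =>
    intro w
    cases w with
    | c x => exact force_c_of_pv u₀ (ILProof.J1 φ ψ) x
    | root =>
      intro h v hv hφv
      cases v with
      | root => exact hv.elim
      | c y => exact ⟨W.c y, ⟨hv, hv, fun A hA => hA⟩, h (W.c y) hv hφv⟩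
  | J2 φ ψ χ =>
    intro w
    cases w with
    | c x => exact force_c_of_pv u₀ (ILProof.J2 φ ψ χ) x
    | root =>
      intro hc v hv hφv
      obtain ⟨h1, h2⟩ := force_conj.1 hc
      obtain ⟨u, hSS, hψu⟩ := h1 v hv hφv
      cases v with
      | root => exact hv.elim
      | c y =>
        cases u with
        | root => exact hSS.elim
        | c z =>
          obtain ⟨t, hSS2, hχt⟩ := h2 (W.c z) hSS.2.1 hψu
          cases t with
          | root => exact hSS2.elim
          | c s =>
            exact ⟨W.c s, ⟨hSS.1, hSS2.2.1,
              fun A hA => hSS2.2.2 A (hSS.2.2 A hA)⟩, hχt⟩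
  | J3 φ ψ χ =>
    intro w
    cases w with
    | c x => exact force_c_of_pv u₀ (ILProof.J3 φ ψ χ) x
    | root =>
      intro hc v hv hd
      obtain ⟨h1, h2⟩ := force_conj.1 hc
      rcases force_disj.1 hd with h' | h'
      · exact h1 v hv h'
      · exact h2 v hv h'
  | J4 φ ψ =>
    intro w
    cases w with
    | c x => exact force_c_of_pv u₀ (ILProof.J4 φ ψ) x
    | root =>
      intro h hdA
      obtain ⟨v, hv, hφv⟩ := force_dia.1 hdA
      obtain ⟨u, hSS, hψu⟩ := h v hv hφv
      cases v with
      | root => exact hv.elim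
      | c y =>
        cases u with
        | root => exact hSS.elim
        | c z => exact force_dia.2 ⟨W.c z, hSS.2.1, hψu⟩
  | J5 φ =>
    intro w
    cases w with
    | c x => exact force_c_of_pv u₀ (ILProof.J5 φ) x
    | root =>
      intro v hv hdφ
      cases v with
      | root => exact hv.elim
      | c y =>
        obtain ⟨v', hv', hφ'⟩ := force_dia.1 hdφ
        cases v' with
        | root => exact absurd hv' (not_rel_root u₀ _)
        | c z =>
          exact ⟨W.c z, ⟨hv, rel_root_closed hv hv', boxSub_of_cR hv'⟩, hφ'⟩
  | mp h1 h2 ih1 ih2 => exact fun w => ih1 w (ih2 w)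
  | nec h ih =>
    intro w v hv
    exact ih v

/-- The key semantic consequence. -/
lemma main_backward {A B : Formula} (h : Pv (A.dia.impl B.dia)) : Pv (A.rhd B) := by
  by_contra hnot
  -- a maximal consistent set containing ¬(A▷B)
  have hcons : Consistent Mschema {(A.rhd B).neg} := by
    rw [consistent_iff_not_dv]
    intro hd
    have : Dv (∅ : Set Formula) ((A.rhd B).neg.neg) := by
      apply Dv.ded
      refine Dv.weak ?_ hd
      intro ξ hξ
      simp only [Set.mem_singleton_iff] at hξ
      exact hξ ▸ Set.mem_insert _ _
    exact hnot (pv_mp (ILProof.dne _) (pv_of_dv this))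
  obtain ⟨Γ₀, hsub, hΓ₀⟩ := lindenbaum hcons
  have hnmem : A.rhd B ∉ Γ₀ :=
    (mcs_neg_mem_iff hΓ₀).1 (hsub rfl)
  obtain ⟨Δ₀, hΔ₀, hprec₀, hcrit₀, hA₀⟩ := ex_rhd_neg hΓ₀ hnmem
  have hBB : B.rhd B ∈ Γ₀ := mem_of_pv hΓ₀ (rhd_of_imp (pv_id B))
  obtain ⟨hnegB, hboxnegB⟩ := hcrit₀ B hBB
  set u₀ : MW := ⟨Δ₀, B, hΔ₀⟩ with hu₀
  have hforce := sound u₀ h W.root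
  have hdiaA : force u₀ A.dia W.root :=
    force_dia.2 ⟨W.c u₀, Or.inl rfl, (truth u₀ A u₀).2 hA₀⟩
  obtain ⟨v, hv, hBv⟩ := force_dia.1 (hforce hdiaA)
  cases v with
  | root => exact (not_rel_root u₀ _ hv).elim
  | c y =>
    have hmemB : B ∈ y.Δ := (truth u₀ B y).1 hBv
    have hnB : B.neg ∈ y.Δ := by
      rcases hv with rfl | htg
      · exact hnegB
      · have inv : ∀ z : MW, Relation.TransGen cR u₀ z → B.neg ∈ z.Δ ∧ Formula.box B.neg ∈ z.Δ := by
          intro z htg'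
          induction htg' with
          | single hstep => exact hstep.1 _ hboxnegB
          | tail h₁ h₂ ih => exact h₂.1 _ ih.2
        exact (inv y htg).1
    exact mcs_no_contra y.mcs hmemB hnB

end ILMAux

/-- IL(M) ⊢ A ▷ B iff IL(M) ⊢ Diamond A → Diamond B. -/
theorem ilm_rhd_dia_characterization (A B : Formula) :
    ILMProvable (Formula.rhd A B) ↔ ILMProvable (A.dia.impl B.dia) := by
  constructor
  · intro h
    exact ILProof.mp (ILProof.J4 A B) h
  · exact ILMAux.main_backward
end
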